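/- arXiv:2511.22358 — 7 statements merged into one kernel-verified Lean document; each statement's English description precedes it below -/
import Mathlib

section
/- For every integer x ≥ 1, every forest T with at least x + 1 vertices, and every vertex u of T, there exist a vertex w of T and a collection {C_1, …, C_t} of w-components of T such that u ∉ C_{[t]} and x ≤ |C_{[t]}| ≤ 2x − 1. -/
/-!
Call `S` admissible for a vertex `w` if it is a union of `w`-components. Among admissible sets
avoiding `u` with at least `x` vertices (`V \ {u}` is one), take `S` of least size; it has at
most `2x - 1` vertices. Otherwise, if `S` is a single `w`-component, then for the neighbour `w'`
of `w` in `S` (unique, as `T` is a forest) the set `S \ {w'}` is a union of `w'`-components; and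
if some `w`-component `C` is a proper part of `S`, then `C` or `S \ C` has at least `x`
vertices. Either way minimality is contradicted.
-/

/-- `C` is a `w`-component of the forest `T` restricted to the vertex set `S`:
`C` is the vertex set of a connected component of the graph induced by `T` on `S \ {w}`. -/
def DelComp {V : Type*} (T : SimpleGraph V) (S : Set V) (w : V) (C : Set V) : Prop :=
  ∃ c : (T.induce (S \ {w})).ConnectedComponent, C = Subtype.val '' c.supp

open Set

namespace SimpleGraph

variable {V : Type*} {T : SimpleGraph V} {w a b : V} {C S : Set V}

/-- `S` is a union of `w`-components of `T`. -/
def IsDelCompUnion (T : SimpleGraph V) (w : V) (S : Set V) : Prop :=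
  w ∉ S ∧ ∀ ⦃a b⦄, a ∈ S → T.Adj a b → b ≠ w → b ∈ S

lemma isDelCompUnion_compl_singleton (T : SimpleGraph V) (w : V) :
    T.IsDelCompUnion w {w}ᶜ :=
  ⟨fun h => h rfl, fun _ _ _ _ hb => hb⟩

lemma IsDelCompUnion.diff (hS : T.IsDelCompUnion w S) (hC : T.IsDelCompUnion w C) :
    T.IsDelCompUnion w (S \ C) :=
  ⟨fun h => hS.1 h.1, fun _ _ ha hab hb =>
    ⟨hS.2 ha.1 hab hb, fun hbC => ha.2 (hC.2 hbC hab.symm fun h => hS.1 (h ▸ ha.1))⟩⟩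

lemma IsDelCompUnion.mem_of_walk (hS : T.IsDelCompUnion w S) (p : T.Walk a b)
    (hp : w ∉ p.support) (ha : a ∈ S) : b ∈ S := by
  induction p with
  | nil => exact ha
  | cons hac p ih =>
    rw [Walk.support_cons, List.mem_cons, not_or] at hp
    exact ih hp.2 (hS.2 ha hac fun h => hp.2 (h ▸ p.start_mem_support))

end SimpleGraph

namespace DelComp

open SimpleGraph

variable {V : Type*} {T : SimpleGraph V} {w a b : V} {C S : Set V}

lemma nonempty (hC : DelComp T univ w C) : C.Nonempty := by
  obtain ⟨c, rfl⟩ := hC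
  obtain ⟨v, hv⟩ := c.nonempty_supp
  exact ⟨v, v, hv, rfl⟩

lemma isDelCompUnion (hC : DelComp T univ w C) : T.IsDelCompUnion w C := by
  obtain ⟨c, rfl⟩ := hC
  refine ⟨fun ⟨v, _, hv⟩ => v.2.2 hv, ?_⟩
  rintro _ b ⟨a, ha, rfl⟩ hab hb
  refine ⟨⟨b, trivial, hb⟩, ?_, rfl⟩
  rw [ConnectedComponent.mem_supp_iff] at ha ⊢
  rw [← ha]
  exact ConnectedComponent.sound (Adj.reachable (by simpa using hab.symm))

lemma exists_mem (T : SimpleGraph V) (h : a ≠ w) : ∃ C, DelComp T univ w C ∧ a ∈ C :=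
  ⟨_, ⟨(T.induce (univ \ {w})).connectedComponentMk ⟨a, trivial, h⟩, rfl⟩, _, rfl, rfl⟩

lemma exists_walk (hC : DelComp T univ w C) (ha : a ∈ C) (hb : b ∈ C) :
    ∃ p : T.Walk a b, w ∉ p.support := by
  obtain ⟨c, rfl⟩ := hC
  obtain ⟨a, ha, rfl⟩ := ha
  obtain ⟨b, hb, rfl⟩ := hb
  obtain ⟨q⟩ := ConnectedComponent.exact (ha.trans hb.symm)
  have hq : w ∉ (q.map (Embedding.induce _).toHom).support := by
    rw [Walk.support_map, List.mem_map]
    rintro ⟨v, _, hv⟩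
    exact v.2.2 hv
  exact ⟨_, hq⟩

lemma subset_of_isDelCompUnion (hC : DelComp T univ w C) (hS : T.IsDelCompUnion w S)
    (hCS : (C ∩ S).Nonempty) : C ⊆ S := by
  obtain ⟨a, haC, haS⟩ := hCS
  intro b hb
  obtain ⟨p, hp⟩ := hC.exists_walk haC hb
  exact hS.mem_of_walk p hp haS

lemma eq_of_adj_of_isAcyclic (hT : T.IsAcyclic) (hC : DelComp T univ w C) (ha : a ∈ C)
    (hb : b ∈ C) (hwa : T.Adj w a) (hwb : T.Adj w b) : a = b := by
  obtain ⟨p, hp⟩ := hC.exists_walk ha hb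
  have hbridge := isBridge_iff_forall_walk_mem_edges.mp
    (isAcyclic_iff_forall_adj_isBridge.mp hT hwb) (.cons hwa p)
  rw [Walk.edges_cons, List.mem_cons] at hbridge
  rcases hbridge with h | h
  · exact (Sym2.congr_right.mp h).symm
  · exact absurd (p.fst_mem_support_of_mem_edges h) hp

lemma exists_isDelCompUnion_diff_singleton (hT : T.IsAcyclic) (hC : DelComp T univ w C) :
    ∃ w' ∈ C, T.IsDelCompUnion w' (C \ {w'}) := by
  by_cases hnbr : ∃ z ∈ C, T.Adj w z
  · obtain ⟨z, hzC, hwz⟩ := hnbr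
    refine ⟨z, hzC, fun h => h.2 rfl, fun a b ha hab hbz => ⟨?_, hbz⟩⟩
    by_cases hbw : b = w
    · subst hbw
      exact absurd (eq_of_adj_of_isAcyclic hT hC ha.1 hzC hab.symm hwz) ha.2
    · exact hC.isDelCompUnion.2 ha.1 hab hbw
  · push Not at hnbr
    obtain ⟨w', hw'⟩ := hC.nonempty
    refine ⟨w', hw', fun h => h.2 rfl, fun a b ha hab hbw' => ⟨?_, hbw'⟩⟩
    exact hC.isDelCompUnion.2 ha.1 hab fun h => hnbr a ha.1 (h ▸ hab.symm)

end DelComp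

namespace SimpleGraph.IsDelCompUnion

variable {V : Type*} [Finite V] {T : SimpleGraph V} {w : V} {S : Set V}

lemma exists_fin_delComp (hS : T.IsDelCompUnion w S) :
    ∃ (t : ℕ) (C : Fin t → Set V),
      (∀ i, DelComp T univ w (C i)) ∧ Function.Injective C ∧ ⋃ i, C i = S := by
  let e := Finite.equivFin {C | DelComp T univ w C ∧ C ⊆ S}
  refine ⟨_, fun i => e.symm i, fun i => (e.symm i).2.1,
    Subtype.val_injective.comp e.symm.injective, ?_⟩
  rw [e.symm.surjective.iUnion_comp (fun C => (C : Set V)), ← sUnion_eq_iUnion]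
  refine (sUnion_subset fun C hC => hC.2).antisymm fun a ha => ?_
  obtain ⟨C, hC, haC⟩ := DelComp.exists_mem T (ne_of_mem_of_not_mem ha hS.1)
  exact ⟨C, ⟨hC, hC.subset_of_isDelCompUnion hS ⟨a, haC, ha⟩⟩, haC⟩

lemma exists_lt (hT : T.IsAcyclic) (hS : T.IsDelCompUnion w S) {x : ℕ} (hx : 1 ≤ x)
    (hSx : 2 * x ≤ S.ncard) :
    ∃ w' S', T.IsDelCompUnion w' S' ∧ S' ⊆ S ∧ x ≤ S'.ncard ∧ S'.ncard < S.ncard := by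
  obtain ⟨a, haS⟩ := nonempty_of_ncard_ne_zero (s := S) (by omega)
  obtain ⟨C, hC, haC⟩ := DelComp.exists_mem T (ne_of_mem_of_not_mem haS hS.1)
  have hCS := hC.subset_of_isDelCompUnion hS ⟨a, haC, haS⟩
  have hCpos : 0 < C.ncard := (ncard_pos).mpr ⟨a, haC⟩
  by_cases hCeq : C = S
  · subst hCeq
    obtain ⟨w', hw', hw'S⟩ := hC.exists_isDelCompUnion_diff_singleton hT
    refine ⟨w', _, hw'S, sdiff_subset, ?_, ?_⟩ <;> rw [ncard_sdiff_singleton_of_mem hw'] <;> omega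
  · have hlt := ncard_lt_ncard (hCS.ssubset_of_ne hCeq)
    by_cases hxC : x ≤ C.ncard
    · exact ⟨w, C, hC.isDelCompUnion, hCS, hxC, hlt⟩
    · refine ⟨w, S \ C, hS.diff hC.isDelCompUnion, sdiff_subset, ?_, ?_⟩ <;>
        rw [ncard_sdiff hCS] <;> omega

lemma exists_ncard_le (hT : T.IsAcyclic) (hS : T.IsDelCompUnion w S) {x : ℕ} (hx : 1 ≤ x)
    (hSx : x ≤ S.ncard) :
    ∃ w' S', T.IsDelCompUnion w' S' ∧ S' ⊆ S ∧ x ≤ S'.ncard ∧ S'.ncard ≤ 2 * x - 1 := by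
  induction hn : S.ncard using Nat.strong_induction_on generalizing w S with
  | _ n ih =>
    by_cases hsmall : S.ncard ≤ 2 * x - 1
    · exact ⟨w, S, hS, subset_rfl, hSx, hsmall⟩
    obtain ⟨w', S', hS', hS'S, hxS', hlt⟩ := hS.exists_lt hT hx (by omega)
    obtain ⟨w'', S'', hS'', hS''S', h⟩ := ih _ (hn ▸ hlt) hS' hxS' rfl
    exact ⟨w'', S'', hS'', hS''S'.trans hS'S, h⟩

end SimpleGraph.IsDelCompUnion

/-- For every `x ≥ 1`, every forest `T` on at least `x + 1` vertices and every vertex `u`,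
there are a vertex `w` and a collection `C 0, …, C (t-1)` of distinct `w`-components of `T`
avoiding `u` whose union has between `x` and `2x − 1` vertices. -/
theorem statement10 (x : ℕ) (hx : 1 ≤ x) (V : Type) [Fintype V] (T : SimpleGraph V)
    (hT : T.IsAcyclic) (hcard : x + 1 ≤ Fintype.card V) (u : V) :
    ∃ (w : V) (t : ℕ) (C : Fin t → Set V),
      (∀ i, DelComp T Set.univ w (C i)) ∧ Function.Injective C ∧
      u ∉ ⋃ i, C i ∧ x ≤ (⋃ i, C i).ncard ∧ (⋃ i, C i).ncard ≤ 2 * x - 1 := by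
  have hcompl : x ≤ ({u}ᶜ : Set V).ncard := by
    rw [ncard_compl, ncard_singleton, Nat.card_eq_fintype_card]
    omega
  obtain ⟨w, S, hS, hSu, hxS, hSx⟩ :=
    (SimpleGraph.isDelCompUnion_compl_singleton T u).exists_ncard_le hT hx hcompl
  obtain ⟨t, C, hC, hinj, rfl⟩ := hS.exists_fin_delComp
  exact ⟨w, t, C, hC, hinj, fun h => hSu h rfl, hxS, hSx⟩
end

section
/- For all integers x > y ≥ 2, every forest T with at least x vertices, and every vertex u of T, there exist a vertex w of T and a collection {C_1, …, C_t} of w-components of T such that u ∉ C_{[t]} and the collection is either (x,y)-feasible or (x,y)-critical. -/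
/-- The collection `C 0, …, C (t-1)` is `(x,y)`-feasible: `x ≤ |C_{[t]}| + 1 ≤ x + y − 2`. -/
def FeasibleColl {V : Type*} (x y : ℕ) (t : ℕ) (C : Fin t → Set V) : Prop :=
  x ≤ (⋃ i, C i).ncard + 1 ∧ (⋃ i, C i).ncard + 1 ≤ x + y - 2

/-- The collection `C 0, …, C (t-1)` is `(x,y)`-critical: `t ≥ 2`,
`x + y − 2 ≤ |C_{[t]}| ≤ 2x − 3`, and `|C_I| ≤ x − 2` for every proper `I ⊊ {0,…,t-1}`. -/
def CriticalColl {V : Type*} (x y : ℕ) (t : ℕ) (C : Fin t → Set V) : Prop :=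
  2 ≤ t ∧ x + y - 2 ≤ (⋃ i, C i).ncard ∧ (⋃ i, C i).ncard ≤ 2 * x - 3 ∧
    ∀ I : Finset (Fin t), I ≠ Finset.univ → (⋃ i ∈ I, C i).ncard ≤ x - 2

section Aux

variable {V : Type*} (T : SimpleGraph V)

/-- `a` and `b` are joined by a walk avoiding `w`. -/
def RW (w a b : V) : Prop := ∃ p : T.Walk a b, w ∉ p.support

variable {T}

lemma RW.ne_left {w a b : V} (h : RW T w a b) : a ≠ w := by
  obtain ⟨p, hp⟩ := h
  exact fun hc => hp (hc ▸ p.start_mem_support)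

lemma RW.ne_right {w a b : V} (h : RW T w a b) : b ≠ w := by
  obtain ⟨p, hp⟩ := h
  exact fun hc => hp (hc ▸ p.end_mem_support)

lemma RW.refl {w a : V} (h : a ≠ w) : RW T w a a :=
  ⟨SimpleGraph.Walk.nil, by simp [h, Ne.symm h]⟩

lemma RW.symm {w a b : V} (h : RW T w a b) : RW T w b a := by
  obtain ⟨p, hp⟩ := h
  exact ⟨p.reverse, by simpa using hp⟩

lemma RW.trans {w a b c : V} (h : RW T w a b) (h' : RW T w b c) : RW T w a c := by
  obtain ⟨p, hp⟩ := h
  obtain ⟨q, hq⟩ := h'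
  refine ⟨p.append q, ?_⟩
  rw [SimpleGraph.Walk.mem_support_append_iff]
  tauto

lemma RW.adj {w a b : V} (h : T.Adj a b) (ha : a ≠ w) (hb : b ≠ w) : RW T w a b :=
  ⟨SimpleGraph.Walk.cons h SimpleGraph.Walk.nil, by
    simp [SimpleGraph.Walk.support_cons, Ne.symm ha, Ne.symm hb]⟩

/-- Reachability in the induced graph on `univ \ {w}` is `RW`. -/
lemma reachable_iff_RW {w : V} (a b : ↥((Set.univ : Set V) \ {w})) :
    (T.induce ((Set.univ : Set V) \ {w})).Reachable a b ↔ RW T w a.1 b.1 := by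
  constructor
  · rintro ⟨q⟩
    induction q with
    | @nil c => exact RW.refl (fun h => c.2.2 h)
    | @cons u v z h q ih =>
      exact RW.trans (RW.adj (by exact h) (fun hh => u.2.2 hh) (fun hh => v.2.2 hh)) ih
  · rintro ⟨p, hp⟩
    have key : ∀ {c d : V} (q : T.Walk c d) (hq : w ∉ q.support),
        (T.induce ((Set.univ : Set V) \ {w})).Reachable
          ⟨c, ⟨trivial, fun hc => hq (hc ▸ q.start_mem_support)⟩⟩
          ⟨d, ⟨trivial, fun hd => hq (hd ▸ q.end_mem_support)⟩⟩ := by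
      intro c d q
      induction q with
      | nil => intro _; exact SimpleGraph.Reachable.refl _
      | @cons c e d h q ih =>
        intro hq
        rw [SimpleGraph.Walk.support_cons, List.mem_cons] at hq
        push_neg at hq
        have h1 : (T.induce ((Set.univ : Set V) \ {w})).Adj
            ⟨c, ⟨trivial, fun hc => hq.1 hc.symm⟩⟩
            ⟨e, ⟨trivial, fun he => hq.2 (he ▸ q.start_mem_support)⟩⟩ := h
        exact (h1.reachable).trans (ih hq.2)
    have := key p hp
    convert this using 2
end Aux

section Aux2

variable {V : Type*} {T : SimpleGraph V}

lemma mem_supp_iff' {G : SimpleGraph V} (c : G.ConnectedComponent) (rep : V)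
    (hrep : G.connectedComponentMk rep = c) (z : V) :
    z ∈ c.supp ↔ G.Reachable z rep := by
  subst hrep
  rw [SimpleGraph.ConnectedComponent.mem_supp_iff]
  exact SimpleGraph.ConnectedComponent.eq

lemma delComp_iff {w : V} {C : Set V} :
    DelComp T Set.univ w C ↔ ∃ v, v ≠ w ∧ C = {z | z ≠ w ∧ RW T w v z} := by
  constructor
  · rintro ⟨c, rfl⟩
    obtain ⟨⟨v, hv⟩, hrep⟩ := c.exists_rep
    refine ⟨v, fun h => hv.2 h, ?_⟩
    ext z
    simp only [Set.mem_image, mem_supp_iff' c _ hrep, Set.mem_setOf_eq]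
    constructor
    · rintro ⟨⟨z', hz'⟩, hr, rfl⟩
      exact ⟨fun h => hz'.2 h, ((reachable_iff_RW _ _).1 hr).symm⟩
    · rintro ⟨hz, hr⟩
      exact ⟨⟨z, ⟨trivial, hz⟩⟩, (reachable_iff_RW _ _).2 hr.symm, rfl⟩
  · rintro ⟨v, hv, rfl⟩
    set c := (T.induce ((Set.univ : Set V) \ {w})).connectedComponentMk ⟨v, ⟨trivial, hv⟩⟩ with hc
    refine ⟨c, ?_⟩
    ext z
    simp only [Set.mem_setOf_eq, Set.mem_image, mem_supp_iff' c _ hc.symm]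
    constructor
    · rintro ⟨hz, hr⟩
      exact ⟨⟨z, ⟨trivial, hz⟩⟩, (reachable_iff_RW _ _).2 hr.symm, rfl⟩
    · rintro ⟨⟨z', hz'⟩, hr, rfl⟩
      exact ⟨fun h => hz'.2 h, ((reachable_iff_RW _ _).1 hr).symm⟩

/-- In an acyclic graph, a vertex `w` has at most one neighbour in each component of `T - w`. -/
lemma unique_nbr (hT : T.IsAcyclic) {w a b : V} (hr : RW T w a b)
    (h1 : T.Adj w a) (h2 : T.Adj w b) : a = b := by
  classical
  by_contra hne
  obtain ⟨p, hp⟩ := hr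
  have haw : a ≠ w := fun h => hp (h ▸ p.start_mem_support)
  have hbw : b ≠ w := fun h => hp (h ▸ p.end_mem_support)
  set q : T.Walk a b := SimpleGraph.Walk.cons h1.symm (SimpleGraph.Walk.cons h2 SimpleGraph.Walk.nil) with hq
  have hqp : q.IsPath := by
    rw [SimpleGraph.Walk.isPath_def, hq]
    simp [haw, hbw, hne, Ne.symm hbw]
  have := hT.path_unique p.toPath ⟨q, hqp⟩
  have heq : (p.toPath : T.Walk a b) = q := congrArg Subtype.val this
  have hw : w ∈ (p.toPath : T.Walk a b).support := by
    rw [heq, hq]; simp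
  exact hp (p.support_toPath_subset hw)

/-- Walks avoiding `w'` starting in `C \ {w'}` stay in `C \ {w'}`, when `w'` is the unique
possible neighbour of `w` in the `w`-component `C`. -/
lemma stay_in (w v w' : V) (hun : ∀ z, z ≠ w → RW T w v z → T.Adj w z → z = w') :
    ∀ {a b : V} (p : T.Walk a b), w' ∉ p.support →
      (a ≠ w ∧ RW T w v a) → a ≠ w' → (b ≠ w ∧ RW T w v b) ∧ b ≠ w' := by
  intro a b p
  induction p with
  | nil => intro _ ha ha'; exact ⟨ha, ha'⟩
  | @cons a c b h q ih =>
    intro hp ha ha'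
    rw [SimpleGraph.Walk.support_cons, List.mem_cons] at hp
    push_neg at hp
    have hcw' : c ≠ w' := fun hc => hp.2 (hc ▸ q.start_mem_support)
    have hcw : c ≠ w := by
      rintro rfl
      exact ha' (hun a ha.1 ha.2 h.symm)
    have hc : c ≠ w ∧ RW T w v c := ⟨hcw, ha.2.trans (RW.adj h ha.1 hcw)⟩
    exact ih hp.2 hc hcw'

end Aux2

section Descent

variable {V : Type} [Fintype V] {T : SimpleGraph V}

lemma descent (hT : T.IsAcyclic) (x : ℕ) (hx : 3 ≤ x) (u : V) :
    ∀ (n : ℕ) (w : V) (A : Set V), u ∉ A → w ∉ A → x - 1 ≤ A.ncard →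
      (∀ C, DelComp T Set.univ w C → (C ∩ A).Nonempty → C ⊆ A) → A.ncard ≤ n →
      ∃ (w' : V) (A' : Set V), (u ∉ A' ∧ w' ∉ A' ∧ x - 1 ≤ A'.ncard ∧
        (∀ C, DelComp T Set.univ w' C → (C ∩ A').Nonempty → C ⊆ A')) ∧
        ∀ C, DelComp T Set.univ w' C → C ⊆ A' → C.ncard ≤ x - 1 := by
  intro n
  induction n with
  | zero =>
    intro w A hu hw hA hcl hle
    omega
  | succ n ih =>
    intro w A hu hw hA hcl hle
    by_cases hall : ∀ C, DelComp T Set.univ w C → C ⊆ A → C.ncard ≤ x - 1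
    · exact ⟨w, A, ⟨hu, hw, hA, hcl⟩, hall⟩
    push_neg at hall
    obtain ⟨C, hC, hCA, hbig⟩ := hall
    have hbig' : x ≤ C.ncard := by omega
    obtain ⟨v, hvw, hCeq⟩ := delComp_iff.1 hC
    have hCne : C.Nonempty := (Set.ncard_pos C.toFinite).1 (by omega)
    have hx' : ∃ w', w' ∈ C ∧ ∀ z ∈ C, T.Adj w z → z = w' := by
      by_cases hadj : ∃ z ∈ C, T.Adj w z
      · obtain ⟨w', hw'C, hadjw'⟩ := hadj
        refine ⟨w', hw'C, fun z hz ha => ?_⟩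
        simp only [hCeq, Set.mem_setOf_eq] at hz hw'C
        exact unique_nbr hT (hz.2.symm.trans hw'C.2) ha hadjw'
      · obtain ⟨w', hw'C⟩ := hCne
        exact ⟨w', hw'C, fun z hz ha => absurd ⟨z, hz, ha⟩ hadj⟩
    obtain ⟨w', hw'C, hun⟩ := hx'
    have hcard' := Set.ncard_diff_singleton_add_one hw'C C.toFinite
    have hCle : C.ncard ≤ A.ncard := Set.ncard_le_ncard hCA A.toFinite
    refine ih w' (C \ {w'}) (fun h => hu (hCA h.1)) (by simp) (by omega) ?_ (by
      have : (C \ {w'}).ncard + 1 = C.ncard := hcard'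
      omega)
    intro D hD hmeet b hb
    obtain ⟨v', hv'w', hDeq⟩ := delComp_iff.1 hD
    obtain ⟨a, haD, haA'⟩ := hmeet
    have hab : RW T w' a b := by
      simp only [hDeq, Set.mem_setOf_eq] at haD hb
      exact haD.2.symm.trans hb.2
    have hun' : ∀ z, z ≠ w → RW T w v z → T.Adj w z → z = w' := fun z h1 h2 h3 =>
      hun z (by simp only [hCeq, Set.mem_setOf_eq]; exact ⟨h1, h2⟩) h3
    obtain ⟨p, hp⟩ := hab
    have haC : a ≠ w ∧ RW T w v a := by
      have := haA'.1
      simp only [hCeq, Set.mem_setOf_eq] at this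
      exact this
    have haw' : a ≠ w' := haA'.2
    obtain ⟨hbC, hbw'⟩ := stay_in w v w' hun' p hp haC haw'
    exact ⟨by simp only [hCeq, Set.mem_setOf_eq]; exact hbC, hbw'⟩

end Descent

/-- For all `x > y ≥ 2`, every forest on at least `x` vertices and every vertex `u`, there are
a vertex `w` and a collection of distinct `w`-components avoiding `u` that is either
`(x,y)`-feasible or `(x,y)`-critical. -/
theorem statement11 (x y : ℕ) (hy : 2 ≤ y) (hyx : y < x) (V : Type) [Fintype V]
    (T : SimpleGraph V) (hT : T.IsAcyclic) (hcard : x ≤ Fintype.card V) (u : V) :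
    ∃ (w : V) (t : ℕ) (C : Fin t → Set V),
      (∀ i, DelComp T Set.univ w (C i)) ∧ Function.Injective C ∧
      u ∉ ⋃ i, C i ∧ (FeasibleColl x y t C ∨ CriticalColl x y t C) := by
  classical
  have hx : 3 ≤ x := by omega
  -- initial data for the descent
  have hA0 : x - 1 ≤ ((Set.univ : Set V) \ {u}).ncard := by
    have h1 : ((Set.univ : Set V) \ {u}).ncard + 1 = (Set.univ : Set V).ncard :=
      Set.ncard_diff_singleton_add_one (Set.mem_univ u) (Set.toFinite _)
    rw [Set.ncard_univ, Nat.card_eq_fintype_card] at h1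
    omega
  have hcl0 : ∀ C, DelComp T Set.univ u C → (C ∩ ((Set.univ : Set V) \ {u})).Nonempty →
      C ⊆ (Set.univ : Set V) \ {u} := by
    rintro C ⟨c, rfl⟩ _ z ⟨z', _, rfl⟩
    exact z'.2
  obtain ⟨w, A, ⟨hu, hw, hA, hcl⟩, hsmall⟩ :=
    descent hT x hx u ((Set.univ : Set V) \ {u}).ncard u ((Set.univ : Set V) \ {u})
      (by simp) (by simp) hA0 hcl0 le_rfl
  -- the family of all w-components inside A
  set 𝒞 : Set (Set V) := {C | DelComp T Set.univ w C ∧ C ⊆ A} with h𝒞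
  have hAsub : A ⊆ ⋃₀ 𝒞 := by
    intro a ha
    have haw : a ≠ w := fun h => hw (h ▸ ha)
    have hCa : DelComp T Set.univ w {z | z ≠ w ∧ RW T w a z} :=
      delComp_iff.2 ⟨a, haw, rfl⟩
    have haCa : a ∈ {z | z ≠ w ∧ RW T w a z} := ⟨haw, RW.refl haw⟩
    have hsubA : {z | z ≠ w ∧ RW T w a z} ⊆ A := hcl _ hCa ⟨a, haCa, ha⟩
    exact ⟨_, ⟨hCa, hsubA⟩, haCa⟩
  have h𝒞A : ⋃₀ 𝒞 ⊆ A := fun z hz => by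
    obtain ⟨c, hc, hzc⟩ := hz; exact hc.2 hzc
  -- choose a minimal subfamily whose union has at least x - 1 vertices
  set P : Set (Set (Set V)) := {F | F ⊆ 𝒞 ∧ x - 1 ≤ (⋃₀ F).ncard} with hP
  have hPne : P.Nonempty := ⟨𝒞, le_refl _, le_trans hA (Set.ncard_le_ncard hAsub (Set.toFinite _))⟩
  obtain ⟨F, hFP, hFmin⟩ := Set.exists_min_image P Set.ncard (Set.toFinite P) hPne
  have hFs : x - 1 ≤ (⋃₀ F).ncard := hFP.2
  have hF𝒞 : F ⊆ 𝒞 := hFP.1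
  -- any proper subfamily has small union
  have hproper : ∀ F' : Set (Set V), F' ⊆ F → F' ≠ F → (⋃₀ F').ncard ≤ x - 2 := by
    intro F' hsub hne
    by_contra hcon
    push_neg at hcon
    have hmem : F' ∈ P := ⟨hsub.trans hF𝒞, by omega⟩
    have hlt : F'.ncard < F.ncard :=
      Set.ncard_lt_ncard (ssubset_of_ne_of_subset hne hsub) (Set.toFinite F)
    exact absurd (hFmin F' hmem) (by omega)
  have hFne : F.Nonempty := by
    rcases Set.eq_empty_or_nonempty F with h | h
    · rw [h] at hFs; simp at hFs; omega
    · exact h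
  -- upper bound on the union
  obtain ⟨c0, hc0⟩ := hFne
  have hsplit : ⋃₀ F = c0 ∪ ⋃₀ (F \ {c0}) := by
    ext z
    simp only [Set.mem_sUnion, Set.mem_union, Set.mem_diff, Set.mem_singleton_iff]
    constructor
    · rintro ⟨c, hc, hz⟩
      by_cases h : c = c0
      · exact Or.inl (h ▸ hz)
      · exact Or.inr ⟨c, ⟨hc, h⟩, hz⟩
    · rintro (hz | ⟨c, hc, hz⟩)
      · exact ⟨c0, hc0, hz⟩
      · exact ⟨c, hc.1, hz⟩
  have hc0small : c0.ncard ≤ x - 1 := hsmall c0 (hF𝒞 hc0).1 (hF𝒞 hc0).2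
  have hupper : (⋃₀ F).ncard ≤ 2 * x - 3 := by
    have h1 : (⋃₀ (F \ {c0})).ncard ≤ x - 2 :=
      hproper _ Set.diff_subset (by intro h; rw [← h] at hc0; exact hc0.2 rfl)
    have h2 : (⋃₀ F).ncard ≤ c0.ncard + (⋃₀ (F \ {c0})).ncard := by
      rw [hsplit]; exact Set.ncard_union_le _ _
    omega
  -- build the indexed family
  have hFfin : F.Finite := Set.toFinite F
  set Ff : Finset (Set V) := hFfin.toFinset with hFf
  set t : ℕ := Ff.card with ht
  set e : ↥Ff ≃ Fin t := Ff.equivFin with he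
  set Cfun : Fin t → Set V := fun i => ((e.symm i : ↥Ff) : Set V) with hCfun
  have hmemF : ∀ i, (Cfun i) ∈ F := fun i => hFfin.mem_toFinset.1 (e.symm i).2
  have hUnion : (⋃ i, Cfun i) = ⋃₀ F := by
    ext z
    simp only [Set.mem_iUnion, Set.mem_sUnion]
    constructor
    · rintro ⟨i, hz⟩
      exact ⟨Cfun i, hmemF i, hz⟩
    · rintro ⟨c, hc, hz⟩
      refine ⟨e ⟨c, hFfin.mem_toFinset.2 hc⟩, ?_⟩
      simp only [hCfun, Equiv.symm_apply_apply]
      exact hz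
  have hinj : Function.Injective Cfun := by
    intro i j hij
    have : e.symm i = e.symm j := Subtype.ext hij
    exact e.symm.injective this
  have htcard : t = F.ncard := by
    rw [ht, hFf, Set.ncard_eq_toFinset_card F hFfin]
  refine ⟨w, t, Cfun, fun i => (hF𝒞 (hmemF i)).1, hinj, ?_, ?_⟩
  · rw [hUnion]
    rintro ⟨c, hc, hzc⟩
    exact hu ((hF𝒞 hc).2 hzc)
  -- the numerical dichotomy
  have hIbound : ∀ I : Finset (Fin t), I ≠ Finset.univ → (⋃ i ∈ I, Cfun i).ncard ≤ x - 2 := by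
    intro I hI
    set F' : Set (Set V) := (fun i => Cfun i) '' ↑I with hF'
    have hU' : (⋃ i ∈ I, Cfun i) = ⋃₀ F' := by
      ext z
      simp only [Set.mem_iUnion, Set.mem_sUnion, hF', Set.mem_image, Finset.mem_coe]
      constructor
      · rintro ⟨i, hi, hz⟩; exact ⟨Cfun i, ⟨i, hi, rfl⟩, hz⟩
      · rintro ⟨c, ⟨i, hi, rfl⟩, hz⟩; exact ⟨i, hi, hz⟩
    have hsub' : F' ⊆ F := by rintro c ⟨i, _, rfl⟩; exact hmemF i
    have hne' : F' ≠ F := by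
      obtain ⟨j, hj⟩ : ∃ j, j ∉ I := by
        by_contra hcon
        push_neg at hcon
        exact hI (Finset.eq_univ_iff_forall.2 hcon)
      intro hcon
      have : Cfun j ∈ F' := hcon ▸ hmemF j
      obtain ⟨i, hi, hji⟩ := this
      exact hj ((hinj hji) ▸ hi)
    rw [hU']
    exact hproper F' hsub' hne'
  by_cases hcase : (⋃₀ F).ncard + 1 ≤ x + y - 2
  · left
    refine ⟨by rw [hUnion]; omega, by rw [hUnion]; omega⟩
  · right
    push_neg at hcase
    have ht2 : 2 ≤ t := by
      rcases Nat.lt_or_ge t 2 with hcon | h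
      swap
      · exact h
      exfalso
      have hF01 : F.ncard = 0 ∨ F.ncard = 1 := by omega
      rcases hF01 with h0 | h1
      · have : F = ∅ := (Set.ncard_eq_zero (Set.toFinite F)).1 h0
        rw [this] at hFs
        simp at hFs
        omega
      · obtain ⟨c, hc⟩ := Set.ncard_eq_one.1 h1
        have hcF : c ∈ F := by rw [hc]; rfl
        have hcsmall : c.ncard ≤ x - 1 := hsmall c (hF𝒞 hcF).1 (hF𝒞 hcF).2
        have : ⋃₀ F = c := by rw [hc]; simp
        rw [this] at hcase hFs
        omega
    refine ⟨ht2, by rw [hUnion]; omega, by rw [hUnion]; exact hupper, hIbound⟩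
end

section
/- Let T be a (K,s)-tree and let u_1, …, u_t be vertices of T with u_{i+1} = r(u_i) for each 1 ≤ i < t. Let Q = D[u_1] ∪ … ∪ D[u_t], and let T* be the rooted tree obtained from the induced forest of T on Q (with parent relation and child-orders inherited from T) by adding a new root v' whose children from left to right are u_1, …, u_t. Then: (1) T* is a (K,s)-tree; and (2) if the parent of u_1 equals the parent u_t* of u_t, or equals l(u_t*), then for every integer h ≥ 0 the graph G^h_{T*} is isomorphic to a subgraph of the induced subgraph of G^h_T on Q ∪ {u_t*}, via an isomorphism mapping v' to u_t* and fixing every vertex of Q. -/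
/-- A DFS-ordered rooted tree on the vertices `0, 1, …, N-1`, listed in DFS preorder
(the root is `0` and the children of each vertex are ordered by their labels).
It is encoded by its parent function: `parent j < j` for every non-root vertex `j`, and the
labelling is a DFS preorder exactly when the parent of each vertex `j ≥ 1` is `j - 1` or an
ancestor of `j - 1`. By convention `parent 0 = 0`. -/
structure DFSTree (N : ℕ) : Type where
  parent : ℕ → ℕ
  parent_zero : parent 0 = 0
  parent_lt : ∀ j, 0 < j → j < N → parent j < j
  preorder_chain : ∀ j, 0 < j → j < N → ∃ k, parent^[k] (j - 1) = parent j

namespace DFSTree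

variable {N : ℕ}

/-- The level `L u` of a vertex `u`: its distance to the root `0`. -/
noncomputable def level (T : DFSTree N) (u : ℕ) : ℕ :=
  sInf {k | T.parent^[k] u = 0}

/-- `D[u]`: the set of descendants of `u`, including `u` itself. -/
def descCl (T : DFSTree N) (u : ℕ) : Set ℕ :=
  {w | w < N ∧ ∃ k, T.parent^[k] w = u}

/-- `w ∈ D(u)`: `w` is a strict descendant of `u`. -/
def StrictDesc (T : DFSTree N) (u w : ℕ) : Prop :=
  w ∈ T.descCl u ∧ w ≠ u

/-- `w` is a left-sibling of `u`. -/
def LeftSib (T : DFSTree N) (u w : ℕ) : Prop :=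
  0 < w ∧ w < u ∧ T.parent w = T.parent u

/-- `w = l u` is the nearest left-cousin of `u`: the last vertex before `u` in the DFS order
having the same level as `u`. -/
def Nlc (T : DFSTree N) (u w : ℕ) : Prop :=
  w < u ∧ T.level w = T.level u ∧ ∀ c, w < c → c < u → T.level c ≠ T.level u

/-- `w = r u` is the nearest right-cousin of `u`: the first vertex after `u` in the DFS order
having the same level as `u`. -/
def Nrc (T : DFSTree N) (u w : ℕ) : Prop :=
  u < w ∧ w < N ∧ T.level w = T.level u ∧ ∀ c, u < c → c < w → T.level c ≠ T.level u

/-- The arc relation generating `G^h_T`: rules (G1)–(G4). -/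
def Arc (T : DFSTree N) (h : ℕ) (u w : ℕ) : Prop :=
  -- (G1) w ∈ D(u)
  T.StrictDesc u w
  -- (G2) w is a left-sibling of u, or a strict descendant of a left-sibling of u
  ∨ (∃ s, T.LeftSib u s ∧ (w = s ∨ T.StrictDesc s w))
  -- (G3) w = l(u*) (u* the parent of u), or a strict descendant of l(u*)
  ∨ (0 < u ∧ ∃ s, T.Nlc (T.parent u) s ∧ (w = s ∨ T.StrictDesc s w))
  -- (G4) with u' the h-th ancestor of u
  ∨ (w = T.parent^[h] u
      ∨ T.Nlc (T.parent^[h] u) w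
      ∨ T.Nrc (T.parent^[h] u) w
      ∨ (((∃ s, T.Nlc (T.parent^[h] u) s ∧ T.StrictDesc s w)
            ∨ T.StrictDesc (T.parent^[h] u) w
            ∨ (∃ s, T.Nrc (T.parent^[h] u) s ∧ T.StrictDesc s w))
          ∧ T.level w ≤ T.level u))

/-- The graph `G^h_T` that is `h`-generated by `T`, as a simple graph on `ℕ` all of whose
edges lie within the vertex set `{0, …, N-1}` of `T`. -/
def graph (T : DFSTree N) (h : ℕ) : SimpleGraph ℕ :=
  SimpleGraph.fromRel (fun u w => u < N ∧ w < N ∧ T.Arc h u w)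

/-- `T` is a `(K, s)`-tree: conditions (T1)–(T4), where `ν u = |D[u]|`. -/
def IsKSTree (T : DFSTree N) (K s : ℕ) : Prop :=
  ∀ u, u < N →
    -- (T1) if l(l(u)) exists then ν(l(l(u))) + ν(l(u)) ≥ ν(u)
    ((∀ a b, T.Nlc u a → T.Nlc a b →
        (T.descCl u).ncard ≤ (T.descCl b).ncard + (T.descCl a).ncard) ∧
     -- (T2) if l(u) exists then K·ν(l(u)) ≥ ν(u)
     (∀ a, T.Nlc u a → (T.descCl u).ncard ≤ K * (T.descCl a).ncard) ∧
     -- (T3) if u is not the rightmost vertex of its level then ν(u) ≥ ν(u')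
     -- for every u' with L(u') ≥ L(u) + s
     ((∃ w, u < w ∧ w < N ∧ T.level w = T.level u) →
        ∀ u', u' < N → T.level u + s ≤ T.level u' →
          (T.descCl u').ncard ≤ (T.descCl u).ncard) ∧
     -- (T4) if u has a child and l(u) exists then l(u) has a child
     ((∃ c, 0 < c ∧ c < N ∧ T.parent c = u) →
        ∀ a, T.Nlc u a → ∃ c', 0 < c' ∧ c' < N ∧ T.parent c' = a))

end DFSTree

namespace DFSTree

variable {N : ℕ} (T : DFSTree N)

lemma parent_le' {j : ℕ} (hj : j < N) : T.parent j ≤ j := by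
  rcases Nat.eq_zero_or_pos j with h | h
  · simp [h, T.parent_zero]
  · exact (T.parent_lt j h hj).le

lemma parent_lt_N {j : ℕ} (hj : j < N) : T.parent j < N :=
  lt_of_le_of_lt (T.parent_le' hj) hj

lemma iter_lt_N {j : ℕ} (k : ℕ) (hj : j < N) : T.parent^[k] j < N := by
  induction k with
  | zero => simpa
  | succ k ih => rw [Function.iterate_succ_apply']; exact T.parent_lt_N ih

lemma iter_le {j : ℕ} (k : ℕ) (hj : j < N) : T.parent^[k] j ≤ j := by
  induction k with
  | zero => simp
  | succ k ih =>
    rw [Function.iterate_succ_apply']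
    exact le_trans (T.parent_le' (T.iter_lt_N k hj)) ih

lemma iter_root (k : ℕ) : T.parent^[k] 0 = 0 := by
  induction k with
  | zero => simp
  | succ k ih => rw [Function.iterate_succ_apply']; rw [ih, T.parent_zero]

lemma exists_iter_zero {j : ℕ} (hj : j < N) : ∃ k, T.parent^[k] j = 0 := by
  induction j using Nat.strong_induction_on with
  | _ j ih =>
    rcases Nat.eq_zero_or_pos j with h | h
    · exact ⟨0, h⟩
    · obtain ⟨k, hk⟩ := ih (T.parent j) (T.parent_lt j h hj) (T.parent_lt_N hj)
      exact ⟨k + 1, by rw [Function.iterate_succ_apply]; exact hk⟩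

lemma iter_level {j : ℕ} (hj : j < N) : T.parent^[T.level j] j = 0 :=
  Nat.sInf_mem (T.exists_iter_zero hj)

lemma level_le {j k : ℕ} (hk : T.parent^[k] j = 0) : T.level j ≤ k :=
  Nat.sInf_le hk

lemma level_zero : T.level 0 = 0 :=
  Nat.le_zero.mp (T.level_le (by simp))

lemma eq_zero_of_level_zero {j : ℕ} (hj : j < N) (h : T.level j = 0) : j = 0 := by
  have := T.iter_level hj; rwa [h] at this

lemma iter_of_level_le {j k : ℕ} (hj : j < N) (h : T.level j ≤ k) :
    T.parent^[k] j = 0 := by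
  rw [← Nat.sub_add_cancel h, Function.iterate_add_apply, T.iter_level hj, T.iter_root]

lemma level_parent {j : ℕ} (h0 : 0 < j) (hj : j < N) :
    T.level j = T.level (T.parent j) + 1 := by
  have hp : T.parent j < N := T.parent_lt_N hj
  have h1 : T.level j ≤ T.level (T.parent j) + 1 := by
    apply T.level_le
    rw [Function.iterate_succ_apply]
    exact T.iter_level hp
  have h2 : 1 ≤ T.level j := by
    rcases Nat.eq_zero_or_pos (T.level j) with h | h
    · exact absurd (T.eq_zero_of_level_zero hj h) (by omega)
    · exact h
  have h3 : T.level (T.parent j) ≤ T.level j - 1 := by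
    apply T.level_le
    have := T.iter_level hj
    rwa [← Nat.sub_add_cancel h2, Function.iterate_succ_apply] at this
  omega

lemma level_iter_add {j k : ℕ} (hj : j < N) (h : k ≤ T.level j) :
    T.level (T.parent^[k] j) + k = T.level j := by
  induction k generalizing j with
  | zero => simp
  | succ k ih =>
    have h0 : 0 < j := by
      rcases Nat.eq_zero_or_pos j with h' | h'
      · subst h'; rw [T.level_zero] at h; omega
      · exact h'
    have hlp := T.level_parent h0 hj
    have := ih (T.parent_lt_N hj) (by omega)
    rw [Function.iterate_succ_apply]
    omega

lemma mem_descCl_self {j : ℕ} (hj : j < N) : j ∈ T.descCl j := ⟨hj, 0, rfl⟩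

lemma descCl_lt_N {u w : ℕ} (h : w ∈ T.descCl u) : w < N := h.1

lemma le_of_mem_descCl {u w : ℕ} (h : w ∈ T.descCl u) : u ≤ w := by
  obtain ⟨hw, k, hk⟩ := h
  calc u = T.parent^[k] w := hk.symm
    _ ≤ w := T.iter_le k hw

lemma descCl_trans {u q w : ℕ} (h1 : w ∈ T.descCl q) (h2 : q ∈ T.descCl u) :
    w ∈ T.descCl u := by
  obtain ⟨hw, k, hk⟩ := h1
  obtain ⟨hq, m, hm⟩ := h2
  exact ⟨hw, m + k, by rw [Function.iterate_add_apply, hk, hm]⟩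

lemma level_le_of_mem_descCl {u w : ℕ} (h : w ∈ T.descCl u) :
    T.level u ≤ T.level w := by
  obtain ⟨hw, k, hk⟩ := h
  rcases le_or_gt k (T.level w) with h' | h'
  · have := T.level_iter_add hw h'; rw [hk] at this; omega
  · have h0 := T.iter_of_level_le hw h'.le
    have hu : u = 0 := by rw [← hk, h0]
    rw [hu, T.level_zero]; omega

lemma level_add_of_mem_descCl {u w k : ℕ} (hw : w < N) (hk : T.parent^[k] w = u)
    (hu : u ≠ 0) : T.level u + k = T.level w := by
  rcases le_or_gt k (T.level w) with h' | h'
  · rw [← hk]; exact T.level_iter_add hw h'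
  · have h0 := T.iter_of_level_le hw h'.le
    exact absurd (by rw [← hk, h0]) hu

lemma eq_of_mem_descCl_level {a b : ℕ} (h : a ∈ T.descCl b)
    (hl : T.level a = T.level b) : a = b := by
  obtain ⟨ha, k, hk⟩ := h
  rcases Nat.eq_zero_or_pos b with rfl | hb
  · rw [T.level_zero] at hl
    exact T.eq_zero_of_level_zero ha hl
  · have := T.level_add_of_mem_descCl ha hk (by omega)
    have hk0 : k = 0 := by omega
    rw [hk0, Function.iterate_zero_apply] at hk; exact hk

lemma descCl_pred {v w : ℕ} (hv : w ∈ T.descCl v) (hw : v < w) :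
    w - 1 ∈ T.descCl v := by
  obtain ⟨hwN, k, hk⟩ := hv
  have hk0 : k ≠ 0 := by rintro rfl; simp at hk; omega
  obtain ⟨k, rfl⟩ := Nat.exists_eq_succ_of_ne_zero hk0
  obtain ⟨j, hj⟩ := T.preorder_chain w (by omega) hwN
  refine ⟨by omega, k + j, ?_⟩
  rw [Function.iterate_add_apply, hj, ← Function.iterate_succ_apply]
  exact hk

lemma mem_descCl_of_between {v x : ℕ} :
    ∀ w, w ∈ T.descCl v → v ≤ x → x ≤ w → x ∈ T.descCl v := by
  intro w
  induction w using Nat.strong_induction_on with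
  | _ w ih =>
    intro hv h1 h2
    rcases eq_or_lt_of_le h2 with rfl | h3
    · exact hv
    · have hvw : v < w := lt_of_le_of_lt h1 h3
      exact ih (w - 1) (by omega) (T.descCl_pred hv hvw) h1 (by omega)

lemma lt_of_notMem_descCl {v x c : ℕ} (hx : x ∈ T.descCl v) (hc1 : v ≤ c)
    (hc2 : c ∉ T.descCl v) : x < c := by
  by_contra h
  exact hc2 (T.mem_descCl_of_between x hx hc1 (by omega))

lemma anc_eq_of_level {x a b : ℕ} (ha : x ∈ T.descCl a) (hb : x ∈ T.descCl b)
    (hl : T.level a = T.level b) : a = b := by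
  obtain ⟨hx, j, hj⟩ := ha
  obtain ⟨-, k, hk⟩ := hb
  rcases le_total j k with h | h
  · have hthis : T.parent^[k - j] a = b := by
      rw [← hj, ← Function.iterate_add_apply, Nat.sub_add_cancel h]; exact hk
    have haN : a < N := by rw [← hj]; exact T.iter_lt_N j hx
    exact T.eq_of_mem_descCl_level ⟨haN, k - j, hthis⟩ hl
  · have hthis : T.parent^[j - k] b = a := by
      rw [← hk, ← Function.iterate_add_apply, Nat.sub_add_cancel h]; exact hj
    have hbN : b < N := by rw [← hk]; exact T.iter_lt_N k hx
    exact (T.eq_of_mem_descCl_level ⟨hbN, j - k, hthis⟩ hl.symm).symm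

lemma parent_mono {x y : ℕ} (hy : y < N) (hxy : x ≤ y) (hl : T.level x = T.level y) :
    T.parent x ≤ T.parent y := by
  rcases eq_or_lt_of_le hxy with rfl | hlt
  · exact le_refl _
  · by_contra hpp
    push_neg at hpp
    have hx : x < N := lt_trans hlt hy
    have hx0 : 0 < x := by
      rcases Nat.eq_zero_or_pos x with rfl | h
      · rw [T.level_zero] at hl
        exact absurd (T.eq_zero_of_level_zero hy hl.symm) (by omega)
      · exact h
    have hy0 : 0 < y := by omega
    have hyd : y ∈ T.descCl (T.parent y) := ⟨hy, 1, by simp⟩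
    have hpx : T.parent x < x := T.parent_lt x hx0 hx
    have hmem : T.parent x ∈ T.descCl (T.parent y) :=
      T.mem_descCl_of_between y hyd (by omega) (by omega)
    have hlev : T.level (T.parent x) = T.level (T.parent y) := by
      have h1 := T.level_parent hx0 hx
      have h2 := T.level_parent hy0 hy
      omega
    have := T.eq_of_mem_descCl_level hmem hlev
    omega

lemma iter_mono {x y : ℕ} (hy : y < N) (hxy : x ≤ y) (hl : T.level x = T.level y) :
    ∀ k, T.parent^[k] x ≤ T.parent^[k] y ∧
      T.level (T.parent^[k] x) = T.level (T.parent^[k] y) := by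
  intro k
  induction k with
  | zero => exact ⟨hxy, hl⟩
  | succ k ih =>
    have hx : x < N := lt_of_le_of_lt hxy hy
    have hyk : T.parent^[k] y < N := T.iter_lt_N k hy
    have hxk : T.parent^[k] x < N := T.iter_lt_N k hx
    constructor
    · rw [Function.iterate_succ_apply', Function.iterate_succ_apply']
      exact T.parent_mono hyk ih.1 ih.2
    · rw [Function.iterate_succ_apply', Function.iterate_succ_apply']
      rcases Nat.eq_zero_or_pos (T.parent^[k] x) with h0 | h0
      · have h0' : T.parent^[k] y = 0 := by
          have := ih.2; rw [h0, T.level_zero] at this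
          exact T.eq_zero_of_level_zero hyk this.symm
        rw [h0, h0']
      · have h0' : 0 < T.parent^[k] y := lt_of_lt_of_le h0 ih.1
        have h1 := T.level_parent h0 hxk
        have h2 := T.level_parent h0' hyk
        omega

lemma nlc_exists {x : ℕ} (h : ∃ c, c < x ∧ T.level c = T.level x) :
    ∃ w, T.Nlc x w := by
  classical
  obtain ⟨c, hc1, hc2⟩ := h
  have hS : ((Finset.range x).filter (fun c => T.level c = T.level x)).Nonempty :=
    ⟨c, Finset.mem_filter.mpr ⟨Finset.mem_range.mpr hc1, hc2⟩⟩
  set S := (Finset.range x).filter (fun c => T.level c = T.level x) with hSdef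
  have hm := Finset.mem_filter.mp (S.max'_mem hS)
  refine ⟨S.max' hS, Finset.mem_range.mp hm.1, hm.2, ?_⟩
  intro c' h1 h2 h3
  have : c' ∈ S := Finset.mem_filter.mpr ⟨Finset.mem_range.mpr h2, h3⟩
  have := S.le_max' c' this
  omega

lemma nlc_ge {x w c : ℕ} (hw : T.Nlc x w) (hc1 : c < x) (hc2 : T.level c = T.level x) :
    c ≤ w := by
  by_contra h
  exact hw.2.2 c (by omega) hc1 hc2

end DFSTree


namespace Merge

open DFSTree

/-- Bundle of the standing hypotheses of the merging lemma. -/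
structure MS {N : ℕ} (T : DFSTree N) (t : ℕ) (u : ℕ → ℕ) (Q : Set ℕ) : Prop where
  ht : 0 < t
  hu : ∀ i, i < t → 0 < u i ∧ u i < N
  hchain : ∀ i, i + 1 < t → T.Nrc (u i) (u (i + 1))
  hQ : Q = ⋃ i ∈ Finset.range t, T.descCl (u i)

variable {N t : ℕ} {T : DFSTree N} {u : ℕ → ℕ} {Q : Set ℕ}

lemma MS.memQ (H : MS T t u Q) {q : ℕ} :
    q ∈ Q ↔ ∃ i, i < t ∧ q ∈ T.descCl (u i) := by
  rw [H.hQ]; simp [Set.mem_iUnion]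

lemma MS.levu (H : MS T t u Q) {i : ℕ} (hi : i < t) :
    T.level (u i) = T.level (u 0) := by
  induction i with
  | zero => rfl
  | succ i ih =>
    have h1 := (H.hchain i hi).2.2.1
    rw [h1, ih (by omega)]

lemma MS.ustrict (H : MS T t u Q) {i j : ℕ} (hij : i < j) (hj : j < t) :
    u i < u j := by
  induction j with
  | zero => omega
  | succ j ih =>
    rcases Nat.lt_succ_iff_lt_or_eq.mp hij with h | h
    · exact lt_trans (ih h (by omega)) (H.hchain j hj).1
    · subst h; exact (H.hchain i hj).1

lemma MS.umono (H : MS T t u Q) {i j : ℕ} (hij : i ≤ j) (hj : j < t) :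
    u i ≤ u j := by
  rcases eq_or_lt_of_le hij with rfl | h
  · exact le_refl _
  · exact (H.ustrict h hj).le

lemma MS.q_lt_N (H : MS T t u Q) {q : ℕ} (hq : q ∈ Q) : q < N := by
  obtain ⟨i, hi, hd⟩ := H.memQ.mp hq; exact hd.1

lemma MS.u0_le (H : MS T t u Q) {q : ℕ} (hq : q ∈ Q) : u 0 ≤ q := by
  obtain ⟨i, hi, hd⟩ := H.memQ.mp hq
  exact le_trans (H.umono (Nat.zero_le i) hi) (T.le_of_mem_descCl hd)

lemma MS.q_pos (H : MS T t u Q) {q : ℕ} (hq : q ∈ Q) : 0 < q :=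
  lt_of_lt_of_le (H.hu 0 H.ht).1 (H.u0_le hq)

lemma MS.lev_ge (H : MS T t u Q) {q : ℕ} (hq : q ∈ Q) :
    T.level (u 0) ≤ T.level q := by
  obtain ⟨i, hi, hd⟩ := H.memQ.mp hq
  rw [← H.levu hi]
  exact T.level_le_of_mem_descCl hd

lemma MS.L_pos (H : MS T t u Q) : 0 < T.level (u 0) := by
  rcases Nat.eq_zero_or_pos (T.level (u 0)) with h | h
  · have := T.eq_zero_of_level_zero (H.hu 0 H.ht).2 h
    have := (H.hu 0 H.ht).1
    omega
  · exact h

lemma MS.descCl_subQ (H : MS T t u Q) {q : ℕ} (hq : q ∈ Q) : T.descCl q ⊆ Q := by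
  obtain ⟨i, hi, hd⟩ := H.memQ.mp hq
  intro w hw
  exact H.memQ.mpr ⟨i, hi, T.descCl_trans hw hd⟩

lemma MS.lt_next (H : MS T t u Q) {i j w : ℕ} (hij : i < j) (hj : j < t)
    (hw : w ∈ T.descCl (u i)) : w < u j := by
  have hnm : u j ∉ T.descCl (u i) := by
    intro hmem
    have := T.eq_of_mem_descCl_level hmem (by rw [H.levu hj, H.levu (lt_trans hij hj)])
    have := H.ustrict hij hj
    omega
  exact T.lt_of_notMem_descCl hw (H.umono (le_of_lt hij) hj) hnm

lemma MS.le_wit (H : MS T t u Q) {q : ℕ} (hq : q ∈ Q) :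
    ∃ w, w ∈ T.descCl (u (t - 1)) ∧ q ≤ w := by
  have ht := H.ht
  obtain ⟨i, hi, hd⟩ := H.memQ.mp hq
  rcases eq_or_lt_of_le (show i ≤ t - 1 by omega) with h | h
  · exact ⟨q, by rwa [← h], le_refl _⟩
  · have ht1 : t - 1 < t := by omega
    exact ⟨u (t - 1), T.mem_descCl_self (H.hu _ ht1).2, (H.lt_next h ht1 hd).le⟩

lemma MS.complete (H : MS T t u Q) {c : ℕ} (hc0 : u 0 ≤ c)
    (hcw : ∃ w, w ∈ T.descCl (u (t - 1)) ∧ c ≤ w)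
    (hlev : T.level (u 0) ≤ T.level c) : c ∈ Q := by
  classical
  have ht := H.ht
  have ht1 : t - 1 < t := by omega
  obtain ⟨w, hw, hcw⟩ := hcw
  have hcN : c < N := lt_of_le_of_lt hcw (T.descCl_lt_N hw)
  set L := T.level (u 0) with hL
  set k := T.level c - L with hk
  set a := T.parent^[k] c with ha
  have hca : c ∈ T.descCl a := ⟨hcN, k, rfl⟩
  have hlev_a : T.level a + k = T.level c := T.level_iter_add hcN (by omega)
  have hlevaL : T.level a = L := by omega
  have hac : a ≤ c := T.le_of_mem_descCl hca
  have ha0 : a ≥ u 0 := by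
    by_contra hlt
    push_neg at hlt
    have := T.eq_of_mem_descCl_level
      (T.mem_descCl_of_between c hca (by omega) hc0) (by rw [hlevaL])
    omega
  suffices hex : ∃ i, i < t ∧ a = u i by
    obtain ⟨i, hi, hiq⟩ := hex
    rw [hiq] at hca
    exact H.memQ.mpr ⟨i, hi, hca⟩
  by_cases hmem : a ∈ T.descCl (u (t - 1))
  · exact ⟨t - 1, ht1, T.eq_of_mem_descCl_level hmem
      (by rw [hlevaL, hL, H.levu ht1])⟩
  have halt : a < u (t - 1) := by
    by_contra hge
    push_neg at hge
    exact hmem (T.mem_descCl_of_between w hw hge (le_trans hac hcw))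
  have hSne : ((Finset.range t).filter (fun i => u i ≤ a)).Nonempty :=
    ⟨0, Finset.mem_filter.mpr ⟨Finset.mem_range.mpr H.ht, ha0⟩⟩
  set S := (Finset.range t).filter (fun i => u i ≤ a) with hS
  set i := S.max' hSne with hi
  have him := Finset.mem_filter.mp (S.max'_mem hSne)
  have hit : i < t := Finset.mem_range.mp him.1
  have hia : u i ≤ a := him.2
  have hine : i ≠ t - 1 := by
    intro hh; rw [hh] at hia; omega
  have hi1 : i + 1 < t := by omega
  have hnext : a < u (i + 1) := by
    by_contra hge
    push_neg at hge
    have : i + 1 ∈ S := Finset.mem_filter.mpr ⟨Finset.mem_range.mpr hi1, hge⟩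
    have := S.le_max' _ this
    omega
  by_cases hm2 : a ∈ T.descCl (u i)
  · exact ⟨i, hit, T.eq_of_mem_descCl_level hm2 (by rw [hlevaL, H.levu hit])⟩
  · have hui_lt : u i < a := by
      rcases eq_or_lt_of_le hia with h | h
      · exact absurd (by rw [h]; exact T.mem_descCl_self (lt_of_le_of_lt hac hcN)) hm2
      · exact h
    have := (H.hchain i hi1).2.2.2 a hui_lt hnext
    rw [hlevaL, H.levu hit] at this
    exact absurd rfl this

lemma MS.atL (H : MS T t u Q) {q : ℕ} (hq : q ∈ Q)
    (hl : T.level q = T.level (u 0)) : ∃ i, i < t ∧ q = u i := by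
  obtain ⟨i, hi, hd⟩ := H.memQ.mp hq
  exact ⟨i, hi, T.eq_of_mem_descCl_level hd (by rw [hl, H.levu hi])⟩

lemma MS.parent_u_notQ (H : MS T t u Q) {i : ℕ} (hi : i < t) :
    T.parent (u i) ∉ Q := by
  intro hmem
  have h1 := H.lev_ge hmem
  have h2 := T.level_parent (H.hu i hi).1 (H.hu i hi).2
  have h3 := H.levu hi
  omega

lemma MS.parentQ_iff (H : MS T t u Q) {q : ℕ} (hq : q ∈ Q) :
    T.parent q ∉ Q ↔ ∃ i, i < t ∧ q = u i := by
  constructor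
  · intro hnp
    obtain ⟨i, hi, hd⟩ := H.memQ.mp hq
    refine ⟨i, hi, ?_⟩
    by_contra hne
    obtain ⟨hqN, k, hk⟩ := hd
    have hk0 : k ≠ 0 := by rintro rfl; simp at hk; exact hne hk
    obtain ⟨k', rfl⟩ := Nat.exists_eq_succ_of_ne_zero hk0
    rw [Function.iterate_succ_apply] at hk
    exact hnp (H.memQ.mpr ⟨i, hi, ⟨T.parent_lt_N hqN, k', hk⟩⟩)
  · rintro ⟨i, hi, rfl⟩
    exact H.parent_u_notQ hi

/- facts about the relabelling map `e`. -/

lemma MS.Qfin (H : MS T t u Q) : Q.Finite :=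
  Set.Finite.subset (Set.finite_Iio N) (fun q hq => H.q_lt_N hq)

section EFacts

variable {e : ℕ → ℕ}

lemma MS.emono (H : MS T t u Q) (he : ∀ q, e q = 1 + (Q ∩ Set.Iio q).ncard)
    {q q' : ℕ} (hqq : q ≤ q') : e q ≤ e q' := by
  rw [he, he]
  have : Q ∩ Set.Iio q ⊆ Q ∩ Set.Iio q' := by
    intro x hx; exact ⟨hx.1, lt_of_lt_of_le hx.2 hqq⟩
  have := Set.ncard_le_ncard this (H.Qfin.subset (Set.inter_subset_left))
  omega

lemma MS.estrict (H : MS T t u Q) (he : ∀ q, e q = 1 + (Q ∩ Set.Iio q).ncard)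
    {q q' : ℕ} (hq : q ∈ Q) (hqq : q < q') : e q < e q' := by
  rw [he, he]
  have hss : Q ∩ Set.Iio q ⊂ Q ∩ Set.Iio q' := by
    constructor
    · intro x hx; exact ⟨hx.1, lt_trans hx.2 hqq⟩
    · intro hsub
      have : q ∈ Q ∩ Set.Iio q' := ⟨hq, hqq⟩
      have := hsub this
      simp at this
  have := Set.ncard_lt_ncard hss (H.Qfin.subset (Set.inter_subset_left))
  omega

lemma MS.epos (he : ∀ q, e q = 1 + (Q ∩ Set.Iio q).ncard) (q : ℕ) : 1 ≤ e q := by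
  rw [he]; omega

lemma MS.ele (H : MS T t u Q) (he : ∀ q, e q = 1 + (Q ∩ Set.Iio q).ncard)
    {q : ℕ} (hq : q ∈ Q) : e q ≤ Q.ncard := by
  rw [he]
  have hss : Q ∩ Set.Iio q ⊂ Q := by
    constructor
    · exact Set.inter_subset_left
    · intro hsub
      have := hsub hq
      simp at this
  have := Set.ncard_lt_ncard hss H.Qfin
  omega

lemma MS.elt_iff (H : MS T t u Q) (he : ∀ q, e q = 1 + (Q ∩ Set.Iio q).ncard)
    {q q' : ℕ} (hq : q ∈ Q) (hq' : q' ∈ Q) : e q < e q' ↔ q < q' := by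
  constructor
  · intro h
    by_contra hge
    push_neg at hge
    rcases eq_or_lt_of_le hge with rfl | h'
    · omega
    · have := H.estrict he hq' h'; omega
  · exact H.estrict he hq

lemma MS.einj (H : MS T t u Q) (he : ∀ q, e q = 1 + (Q ∩ Set.Iio q).ncard)
    {q q' : ℕ} (hq : q ∈ Q) (hq' : q' ∈ Q) (heq : e q = e q') : q = q' := by
  rcases lt_trichotomy q q' with h | h | h
  · have := H.estrict he hq h; omega
  · exact h
  · have := H.estrict he hq' h; omega

lemma MS.esurj (H : MS T t u Q) (he : ∀ q, e q = 1 + (Q ∩ Set.Iio q).ncard)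
    {m : ℕ} (h1 : 1 ≤ m) (h2 : m ≤ Q.ncard) : ∃ q, q ∈ Q ∧ e q = m := by
  have hinj : Set.InjOn e Q := fun a ha b hb => H.einj he ha hb
  have hcard : (e '' Q).ncard = Q.ncard := Set.ncard_image_of_injOn hinj
  have hsub : e '' Q ⊆ Set.Icc 1 Q.ncard := by
    rintro x ⟨q, hq, rfl⟩
    exact ⟨MS.epos he q, H.ele he hq⟩
  have hicc : (Set.Icc 1 Q.ncard).ncard = Q.ncard := by
    rw [← Finset.coe_Icc, Set.ncard_coe_finset, Nat.card_Icc]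
    omega
  have heq : e '' Q = Set.Icc 1 Q.ncard :=
    Set.eq_of_subset_of_ncard_le hsub (by omega) (Set.finite_Icc _ _)
  have : m ∈ e '' Q := by rw [heq]; exact ⟨h1, h2⟩
  obtain ⟨q, hq, hqm⟩ := this
  exact ⟨q, hq, hqm⟩

end EFacts


section Star

open scoped Classical

variable {N t : ℕ} {T : DFSTree N} {u : ℕ → ℕ} {Q : Set ℕ} {e : ℕ → ℕ} {M : ℕ}
  {Ts : DFSTree M}

lemma MS.eltM (H : MS T t u Q) (he : ∀ q, e q = 1 + (Q ∩ Set.Iio q).ncard)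
    (hM : M = Q.ncard + 1) {q : ℕ} (hq : q ∈ Q) : e q < M := by
  have := H.ele he hq; omega

lemma MS.iterPe (H : MS T t u Q) {Pf : ℕ → ℕ}
    (hp : ∀ q ∈ Q, Pf (e q) = if T.parent q ∈ Q then e (T.parent q) else 0) :
    ∀ k q, q ∈ Q → T.parent^[k] q ∈ Q →
      Pf^[k] (e q) = e (T.parent^[k] q) := by
  intro k
  induction k with
  | zero => intro q _ _; simp
  | succ k ih =>
    intro q hq hk
    have hyN : T.parent^[k] q < N := T.iter_lt_N k (H.q_lt_N hq)
    have hy : T.parent^[k] q ∈ Q := by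
      refine H.descCl_subQ hk ⟨hyN, 1, ?_⟩
      rw [Function.iterate_one, Function.iterate_succ_apply']
    have hk' : T.parent (T.parent^[k] q) ∈ Q := by
      rw [← Function.iterate_succ_apply' T.parent k q]; exact hk
    rw [Function.iterate_succ_apply' Pf, ih q hq hy, hp _ hy, if_pos hk',
      Function.iterate_succ_apply']

lemma MS.levE (H : MS T t u Q) (he : ∀ q, e q = 1 + (Q ∩ Set.Iio q).ncard)
    (hM : M = Q.ncard + 1)
    (hp : ∀ q ∈ Q, Ts.parent (e q) = if T.parent q ∈ Q then e (T.parent q) else 0) :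
    ∀ q ∈ Q, Ts.level (e q) + T.level (u 0) = T.level q + 1 := by
  intro q
  induction q using Nat.strong_induction_on with
  | _ q ih =>
    intro hq
    have hqN := H.q_lt_N hq
    have heM := H.eltM he hM hq
    have hep := MS.epos he q
    have hlev := Ts.level_parent hep heM
    by_cases hpq : T.parent q ∈ Q
    · have hlt : T.parent q < q := T.parent_lt q (H.q_pos hq) hqN
      have hih := ih (T.parent q) hlt hpq
      rw [hp q hq, if_pos hpq] at hlev
      have h2 := T.level_parent (H.q_pos hq) hqN
      omega
    · rw [hp q hq, if_neg hpq, Ts.level_zero] at hlev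
      obtain ⟨i, hi, rfl⟩ := (H.parentQ_iff hq).mp hpq
      rw [H.levu hi]
      omega

lemma MS.levE_ne0 (H : MS T t u Q) (he : ∀ q, e q = 1 + (Q ∩ Set.Iio q).ncard)
    (hM : M = Q.ncard + 1)
    (hp : ∀ q ∈ Q, Ts.parent (e q) = if T.parent q ∈ Q then e (T.parent q) else 0)
    {q : ℕ} (hq : q ∈ Q) : Ts.level (e q) ≠ 0 := by
  have h1 := H.levE he hM hp q hq
  have h2 := H.lev_ge hq
  omega

lemma MS.descE_aux (H : MS T t u Q) (he : ∀ q, e q = 1 + (Q ∩ Set.Iio q).ncard)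
    (hM : M = Q.ncard + 1)
    (hp : ∀ q ∈ Q, Ts.parent (e q) = if T.parent q ∈ Q then e (T.parent q) else 0)
    {q : ℕ} (hq : q ∈ Q) :
    ∀ k x, x < M → Ts.parent^[k] x = e q → ∃ w, w ∈ T.descCl q ∧ e w = x := by
  intro k
  induction k with
  | zero =>
    intro x _ hk
    simp only [Function.iterate_zero_apply] at hk
    exact ⟨q, T.mem_descCl_self (H.q_lt_N hq), hk.symm⟩
  | succ k ih =>
    intro x hxM hk
    rw [Function.iterate_succ_apply] at hk
    have hx0 : x ≠ 0 := by
      rintro rfl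
      rw [Ts.parent_zero, Ts.iter_root] at hk
      have := MS.epos he q; omega
    obtain ⟨y, hy, rfl⟩ := H.esurj he (show 1 ≤ x by omega)
      (show x ≤ Q.ncard by omega)
    by_cases hpy : T.parent y ∈ Q
    · rw [hp y hy, if_pos hpy] at hk
      obtain ⟨w, hw, hwe⟩ := ih (e (T.parent y)) (H.eltM he hM hpy) hk
      have hweq : w = T.parent y :=
        H.einj he (H.descCl_subQ hq hw) hpy hwe
      rw [hweq] at hw
      obtain ⟨hwN, m, hm⟩ := hw
      refine ⟨y, ⟨H.q_lt_N hy, m + 1, ?_⟩, rfl⟩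
      rw [Function.iterate_add_apply, Function.iterate_one]
      exact hm
    · rw [hp y hy, if_neg hpy, Ts.iter_root] at hk
      have := MS.epos he q; omega

lemma MS.descE (H : MS T t u Q) (he : ∀ q, e q = 1 + (Q ∩ Set.Iio q).ncard)
    (hM : M = Q.ncard + 1)
    (hp : ∀ q ∈ Q, Ts.parent (e q) = if T.parent q ∈ Q then e (T.parent q) else 0)
    {q : ℕ} (hq : q ∈ Q) : Ts.descCl (e q) = e '' T.descCl q := by
  ext x
  constructor
  · rintro ⟨hxM, k, hk⟩
    obtain ⟨w, hw, hwe⟩ := H.descE_aux he hM hp hq k x hxM hk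
    exact ⟨w, hw, hwe⟩
  · rintro ⟨w, hw, rfl⟩
    have hwQ : w ∈ Q := H.descCl_subQ hq hw
    obtain ⟨hwN, k, hk⟩ := hw
    refine ⟨H.eltM he hM hwQ, k, ?_⟩
    rw [H.iterPe hp k w hwQ (by rw [hk]; exact hq), hk]

lemma MS.ncardE (H : MS T t u Q) (he : ∀ q, e q = 1 + (Q ∩ Set.Iio q).ncard)
    (hM : M = Q.ncard + 1)
    (hp : ∀ q ∈ Q, Ts.parent (e q) = if T.parent q ∈ Q then e (T.parent q) else 0)
    {q : ℕ} (hq : q ∈ Q) : (Ts.descCl (e q)).ncard = (T.descCl q).ncard := by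
  rw [H.descE he hM hp hq]
  exact Set.ncard_image_of_injOn
    (fun a ha b hb => H.einj he (H.descCl_subQ hq ha) (H.descCl_subQ hq hb))

lemma MS.nlc_inv (H : MS T t u Q) (he : ∀ q, e q = 1 + (Q ∩ Set.Iio q).ncard)
    (hM : M = Q.ncard + 1)
    (hp : ∀ q ∈ Q, Ts.parent (e q) = if T.parent q ∈ Q then e (T.parent q) else 0)
    {q a : ℕ} (hq : q ∈ Q) (hnlc : Ts.Nlc (e q) a) :
    ∃ w, w ∈ Q ∧ a = e w ∧ T.Nlc q w := by
  obtain ⟨h1, h2, h3⟩ := hnlc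
  have haM : a < M := lt_trans h1 (H.eltM he hM hq)
  have ha0 : a ≠ 0 := by
    rintro rfl
    rw [Ts.level_zero] at h2
    exact H.levE_ne0 he hM hp hq h2.symm
  obtain ⟨w, hwQ, rfl⟩ := H.esurj he (m := a) (by omega) (by omega)
  have hwq : w < q := (H.elt_iff he hwQ hq).mp h1
  have hlw := H.levE he hM hp w hwQ
  have hlq := H.levE he hM hp q hq
  refine ⟨w, hwQ, rfl, hwq, by omega, ?_⟩
  intro c h4 h5 h6
  have hcQ : c ∈ Q := by
    refine H.complete (le_trans (H.u0_le hwQ) (by omega)) ?_ (by rw [h6]; exact H.lev_ge hq)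
    obtain ⟨w', hw', hqw'⟩ := H.le_wit hq
    exact ⟨w', hw', by omega⟩
  have he1 := H.estrict he hwQ h4
  have he2 := H.estrict he hcQ h5
  have hlc := H.levE he hM hp c hcQ
  exact h3 (e c) he1 he2 (by omega)

lemma MS.nlc_fwd (H : MS T t u Q) (he : ∀ q, e q = 1 + (Q ∩ Set.Iio q).ncard)
    (hM : M = Q.ncard + 1)
    (hp : ∀ q ∈ Q, Ts.parent (e q) = if T.parent q ∈ Q then e (T.parent q) else 0)
    {q w : ℕ} (hq : q ∈ Q) (hw : w ∈ Q) (h : T.Nlc q w) : Ts.Nlc (e q) (e w) := by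
  have hlw := H.levE he hM hp w hw
  have hlq := H.levE he hM hp q hq
  refine ⟨H.estrict he hw h.1, by have := h.2.1; omega, ?_⟩
  intro c h4 h5 h6
  have hc0 : 1 ≤ c := le_of_lt (lt_of_le_of_lt (MS.epos he w) h4)
  have hcM : c < M := lt_trans h5 (H.eltM he hM hq)
  obtain ⟨c', hc'Q, rfl⟩ := H.esurj he (m := c) (by omega) (by omega)
  have h7 : w < c' := (H.elt_iff he hw hc'Q).mp h4
  have h8 : c' < q := (H.elt_iff he hc'Q hq).mp h5
  have hlc := H.levE he hM hp c' hc'Q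
  exact h.2.2 c' h7 h8 (by omega)

lemma MS.nrc_inv (H : MS T t u Q) (he : ∀ q, e q = 1 + (Q ∩ Set.Iio q).ncard)
    (hM : M = Q.ncard + 1)
    (hp : ∀ q ∈ Q, Ts.parent (e q) = if T.parent q ∈ Q then e (T.parent q) else 0)
    {p x : ℕ} (hpQ : p ∈ Q) (hnrc : Ts.Nrc (e p) x) :
    ∃ w, w ∈ Q ∧ x = e w ∧ T.Nrc p w := by
  obtain ⟨h1, h1M, h2, h3⟩ := hnrc
  have hx1 : 1 ≤ x := le_trans (MS.epos he p) h1.le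
  obtain ⟨w, hwQ, rfl⟩ := H.esurj he (m := x) (by omega) (by omega)
  have hpw : p < w := (H.elt_iff he hpQ hwQ).mp h1
  have hlw := H.levE he hM hp w hwQ
  have hlp := H.levE he hM hp p hpQ
  refine ⟨w, hwQ, rfl, hpw, H.q_lt_N hwQ, by omega, ?_⟩
  intro c h4 h5 h6
  have hcQ : c ∈ Q := by
    refine H.complete (le_trans (H.u0_le hpQ) (by omega)) ?_ (by rw [h6]; exact H.lev_ge hpQ)
    obtain ⟨w', hw', hqw'⟩ := H.le_wit hwQ
    exact ⟨w', hw', by omega⟩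
  have he1 := H.estrict he hpQ h4
  have he2 := H.estrict he hcQ h5
  have hlc := H.levE he hM hp c hcQ
  exact h3 (e c) he1 he2 (by omega)

lemma MS.sdesc_inv (H : MS T t u Q) (he : ∀ q, e q = 1 + (Q ∩ Set.Iio q).ncard)
    (hM : M = Q.ncard + 1)
    (hp : ∀ q ∈ Q, Ts.parent (e q) = if T.parent q ∈ Q then e (T.parent q) else 0)
    {q x : ℕ} (hq : q ∈ Q) (h : Ts.StrictDesc (e q) x) :
    ∃ w, w ∈ Q ∧ x = e w ∧ T.StrictDesc q w := by
  obtain ⟨hmem, hne⟩ := h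
  rw [H.descE he hM hp hq] at hmem
  obtain ⟨w, hw, rfl⟩ := hmem
  exact ⟨w, H.descCl_subQ hq hw, rfl, hw, fun hh => hne (by rw [hh])⟩

lemma MS.iterD (H : MS T t u Q) (he : ∀ q, e q = 1 + (Q ∩ Set.Iio q).ncard)
    (hM : M = Q.ncard + 1)
    (hp : ∀ q ∈ Q, Ts.parent (e q) = if T.parent q ∈ Q then e (T.parent q) else 0)
    {q : ℕ} (hq : q ∈ Q) (h : ℕ) :
    (T.parent^[h] q ∈ Q ∧ Ts.parent^[h] (e q) = e (T.parent^[h] q)) ∨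
    (T.level (T.parent^[h] q) < T.level (u 0) ∧ Ts.parent^[h] (e q) = 0) := by
  induction h with
  | zero => exact Or.inl ⟨hq, by simp⟩
  | succ h ih =>
    rcases ih with ⟨hin, heq⟩ | ⟨hlev, heq⟩
    · by_cases hpp : T.parent (T.parent^[h] q) ∈ Q
      · left
        constructor
        · rw [Function.iterate_succ_apply']; exact hpp
        · rw [Function.iterate_succ_apply', Function.iterate_succ_apply', heq,
            hp _ hin, if_pos hpp]
      · right
        constructor
        · obtain ⟨i, hi, hieq⟩ := (H.parentQ_iff hin).mp hpp
          rw [Function.iterate_succ_apply', hieq]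
          have h1 := T.level_parent (H.hu i hi).1 (H.hu i hi).2
          have h2 := H.levu hi
          omega
        · rw [Function.iterate_succ_apply', heq, hp _ hin, if_neg hpp]
    · right
      constructor
      · rw [Function.iterate_succ_apply']
        rcases Nat.eq_zero_or_pos (T.parent^[h] q) with h0 | h0
        · rw [h0, T.parent_zero]; rw [h0] at hlev; exact hlev
        · have h1 := T.level_parent h0 (T.iter_lt_N h (H.q_lt_N hq)); omega
      · rw [Function.iterate_succ_apply', heq, Ts.parent_zero]

lemma MS.star_ks {K s : ℕ} (H : MS T t u Q)
    (he : ∀ q, e q = 1 + (Q ∩ Set.Iio q).ncard) (hM : M = Q.ncard + 1)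
    (hp : ∀ q ∈ Q, Ts.parent (e q) = if T.parent q ∈ Q then e (T.parent q) else 0)
    (hT : T.IsKSTree K s) : Ts.IsKSTree K s := by
  intro x hxM
  rcases Nat.eq_zero_or_pos x with rfl | hx0
  · refine ⟨?_, ?_, ?_, ?_⟩
    · intro a b h1 _; exact absurd h1.1 (by omega)
    · intro a h1; exact absurd h1.1 (by omega)
    · rintro ⟨w, hw1, hw2, hw3⟩
      exfalso
      have := Ts.eq_zero_of_level_zero hw2 (by rw [hw3, Ts.level_zero])
      omega
    · intro _ a h1; exact absurd h1.1 (by omega)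
  · obtain ⟨q, hq, rfl⟩ := H.esurj he (m := x) (by omega) (by rw [hM] at hxM; omega)
    have hqN := H.q_lt_N hq
    obtain ⟨hT1, hT2, hT3, hT4⟩ := hT q hqN
    refine ⟨?_, ?_, ?_, ?_⟩
    · intro a b h1 h2
      obtain ⟨w, hwQ, rfl, hnw⟩ := H.nlc_inv he hM hp hq h1
      obtain ⟨w2, hw2Q, rfl, hnw2⟩ := H.nlc_inv he hM hp hwQ h2
      rw [H.ncardE he hM hp hq, H.ncardE he hM hp hwQ, H.ncardE he hM hp hw2Q]
      exact hT1 w w2 hnw hnw2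
    · intro a h1
      obtain ⟨w, hwQ, rfl, hnw⟩ := H.nlc_inv he hM hp hq h1
      rw [H.ncardE he hM hp hq, H.ncardE he hM hp hwQ]
      exact hT2 w hnw
    · rintro ⟨w, hw1, hw2, hw3⟩ x' hx'M hlev
      have hw0 : 1 ≤ w := le_trans (MS.epos he q) hw1.le
      obtain ⟨w', hw'Q, rfl⟩ := H.esurj he (m := w) (by omega) (by rw [hM] at hw2; omega)
      have hlw := H.levE he hM hp w' hw'Q
      have hlq := H.levE he hM hp q hq
      have hwit : ∃ ww, q < ww ∧ ww < N ∧ T.level ww = T.level q :=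
        ⟨w', (H.elt_iff he hq hw'Q).mp hw1, H.q_lt_N hw'Q, by omega⟩
      rcases Nat.eq_zero_or_pos x' with rfl | hx'0
      · exfalso
        have := H.levE_ne0 he hM hp hq
        rw [Ts.level_zero] at hlev
        omega
      · obtain ⟨q', hq', rfl⟩ := H.esurj he (m := x') (by omega) (by rw [hM] at hx'M; omega)
        have hlq' := H.levE he hM hp q' hq'
        rw [H.ncardE he hM hp hq, H.ncardE he hM hp hq']
        have hLle := H.lev_ge hq
        have hLle' := H.lev_ge hq'
        exact hT3 hwit q' (H.q_lt_N hq') (by omega)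
    · rintro ⟨c, hc0, hcM, hcp⟩ a h1
      obtain ⟨w, hwQ, rfl, hnw⟩ := H.nlc_inv he hM hp hq h1
      obtain ⟨c', hc'Q, rfl⟩ := H.esurj he (m := c) (by omega) (by rw [hM] at hcM; omega)
      have hcp' : T.parent c' = q := by
        rw [hp c' hc'Q] at hcp
        by_cases hpc : T.parent c' ∈ Q
        · rw [if_pos hpc] at hcp; exact H.einj he hpc hq hcp
        · rw [if_neg hpc] at hcp
          exact absurd hcp (by have := MS.epos he q; omega)
      obtain ⟨c'', hc''1, hc''2, hc''3⟩ :=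
        hT4 ⟨c', H.q_pos hc'Q, H.q_lt_N hc'Q, hcp'⟩ w hnw
      have hc''Q : c'' ∈ Q := H.descCl_subQ hwQ
        ⟨hc''2, 1, by rw [Function.iterate_one]; exact hc''3⟩
      refine ⟨e c'', by have := MS.epos he c''; omega, H.eltM he hM hc''Q, ?_⟩
      rw [hp _ hc''Q, if_pos (by rw [hc''3]; exact hwQ), hc''3]

end Star


section PartTwo

open scoped Classical

variable {N t K s : ℕ} {T : DFSTree N} {u : ℕ → ℕ} {Q : Set ℕ} {e : ℕ → ℕ} {M : ℕ}
  {Ts : DFSTree M}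

/-- The key structural consequence of (T4): if `x` is the nearest left-cousin of `y`,
then there is no vertex `c` strictly between the `d`-th ancestors of `x` and `y`
at their common level. -/
lemma no_between_anc (hT : T.IsKSTree K s) {x y : ℕ} (hyN : y < N)
    (hnlc : T.Nlc y x) :
    ∀ d c, c < N → T.level c + d = T.level y → T.parent^[d] x < c →
      c < T.parent^[d] y → False := by
  intro d
  induction d with
  | zero =>
    intro c _ hlc h1 h2
    simp only [Function.iterate_zero_apply] at h1 h2
    exact hnlc.2.2 c h1 h2 (by omega)
  | succ d ih =>
    intro c hcN hlc h1 h2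
    have hxN : x < N := lt_trans hnlc.1 hyN
    have hly : d + 1 ≤ T.level y := by omega
    have hβ'N : T.parent^[d] y < N := T.iter_lt_N d hyN
    have hβ'lev : T.level (T.parent^[d] y) + d = T.level y :=
      T.level_iter_add hyN (by omega)
    have hβ'pos : 0 < T.parent^[d] y := by
      rcases Nat.eq_zero_or_pos (T.parent^[d] y) with h0 | h0
      · rw [h0, T.level_zero] at hβ'lev; omega
      · exact h0
    have hβm : T.parent^[d+1] y = T.parent (T.parent^[d] y) :=
      Function.iterate_succ_apply' T.parent d y
    have hβmN : T.parent^[d+1] y < N := T.iter_lt_N (d+1) hyN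
    have hβmlev : T.level (T.parent^[d+1] y) + (d+1) = T.level y :=
      T.level_iter_add hyN hly
    -- nearest left cousin of βm exists (c is a witness)
    obtain ⟨w, hw⟩ := T.nlc_exists (x := T.parent^[d+1] y) ⟨c, h2, by omega⟩
    have hcw : c ≤ w := T.nlc_ge hw h2 (by omega)
    -- T4 at βm
    obtain ⟨d0, hd01, hd02, hd03⟩ := (hT _ hβmN).2.2.2
      ⟨T.parent^[d] y, hβ'pos, hβ'N, hβm.symm⟩ w hw
    have hwN : w < N := lt_trans hw.1 hβmN
    have hd0lev : T.level d0 = T.level w + 1 := by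
      have := T.level_parent hd01 hd02
      rw [hd03] at this
      exact this
    have hwd0 : w < d0 := by
      have h' := T.parent_lt d0 hd01 hd02
      rw [hd03] at h'
      exact h'
    -- α' < c
    have hα'N : T.parent^[d] x < N := T.iter_lt_N d hxN
    have hα'c : T.parent^[d] x < c := by
      by_contra hge
      push_neg at hge
      have hα : T.parent^[d+1] x = T.parent (T.parent^[d] x) :=
        Function.iterate_succ_apply' T.parent d x
      have hmem : T.parent^[d] x ∈ T.descCl (T.parent^[d+1] x) :=
        ⟨hα'N, 1, by rw [Function.iterate_one, hα]⟩
      have hcmem : c ∈ T.descCl (T.parent^[d+1] x) :=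
        T.mem_descCl_of_between _ hmem h1.le hge
      have hαlev : T.level (T.parent^[d+1] x) + (d+1) = T.level x :=
        T.level_iter_add hxN (by rw [hnlc.2.1]; omega)
      have := T.eq_of_mem_descCl_level hcmem
        (by rw [hnlc.2.1] at hαlev; omega)
      omega
    -- d0 < β'
    have hd0mem : d0 ∈ T.descCl w := ⟨hd02, 1, by rw [Function.iterate_one, hd03]⟩
    have hβ'notw : T.parent^[d] y ∉ T.descCl w := by
      intro hmem
      have hβ'βm : T.parent^[d] y ∈ T.descCl (T.parent^[d+1] y) :=
        ⟨hβ'N, 1, by rw [Function.iterate_one, hβm]⟩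
      have h' := T.anc_eq_of_level hmem hβ'βm hw.2.1
      have hw1 := hw.1
      omega
    have hwβ' : w ≤ T.parent^[d] y := by
      have h3 : T.parent^[d+1] y < T.parent^[d] y := by
        rw [hβm]; exact T.parent_lt _ hβ'pos hβ'N
      have hw1 := hw.1
      omega
    have hd0β' : d0 < T.parent^[d] y :=
      T.lt_of_notMem_descCl hd0mem hwβ' hβ'notw
    exact ih d0 hd02 (by rw [hd0lev]; have := hw.2.1; omega) (by omega) hd0β'

lemma MS.parent_lev (H : MS T t u Q) {i : ℕ} (hi : i < t) :
    T.level (T.parent (u i)) + 1 = T.level (u 0) := by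
  have h1 := T.level_parent (H.hu i hi).1 (H.hu i hi).2
  have h2 := H.levu hi
  omega

lemma MS.parent_le_parent (H : MS T t u Q) {i j : ℕ} (hij : i ≤ j) (hj : j < t) :
    T.parent (u i) ≤ T.parent (u j) :=
  T.parent_mono (H.hu j hj).2 (H.umono hij hj)
    (by rw [H.levu (lt_of_le_of_lt hij hj), H.levu hj])

lemma MS.parent_two (H : MS T t u Q)
    (hyp : T.parent (u 0) = T.parent (u (t - 1)) ∨
      T.Nlc (T.parent (u (t - 1))) (T.parent (u 0)))
    {i : ℕ} (hi : i < t) :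
    T.parent (u i) = T.parent (u 0) ∨ T.parent (u i) = T.parent (u (t - 1)) := by
  have ht := H.ht
  have ht1 : t - 1 < t := by omega
  have h1 : T.parent (u 0) ≤ T.parent (u i) := H.parent_le_parent (Nat.zero_le i) hi
  have h2 : T.parent (u i) ≤ T.parent (u (t - 1)) :=
    H.parent_le_parent (by omega) ht1
  rcases hyp with heq | hnlc
  · right; omega
  · rcases eq_or_lt_of_le h1 with h3 | h3
    · left; omega
    · rcases eq_or_lt_of_le h2 with h3' | h3'
      · right; omega
      · exfalso
        have hl1 := H.parent_lev hi
        have hl2 := H.parent_lev ht1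
        exact hnlc.2.2 _ h3 h3' (by omega)

/-- Adjacency of the merged root image `u*` to every vertex of `Q`. -/
lemma MS.root_adj (H : MS T t u Q) (hT : T.IsKSTree K s)
    (hyp : T.parent (u 0) = T.parent (u (t - 1)) ∨
      T.Nlc (T.parent (u (t - 1))) (T.parent (u 0)))
    (h : ℕ) {q' : ℕ} (hq' : q' ∈ Q) :
    (T.graph h).Adj (T.parent (u (t - 1))) q' := by
  have ht := H.ht
  have ht1 : t - 1 < t := by omega
  have hUN : T.parent (u (t - 1)) < N := T.parent_lt_N (H.hu _ ht1).2
  have hUlev := H.parent_lev ht1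
  have hAlev := H.parent_lev (show 0 < t from ht)
  have hq'N := H.q_lt_N hq'
  have hq'lev := H.lev_ge hq'
  have hne : T.parent (u (t - 1)) ≠ q' := by
    intro heq
    rw [heq] at hUlev
    omega
  obtain ⟨j, hj, hdj⟩ := H.memQ.mp hq'
  have hpjlt : T.parent (u j) < u j := T.parent_lt _ (H.hu j hj).1 (H.hu j hj).2
  have hujq' : u j ≤ q' := T.le_of_mem_descCl hdj
  have hq'pj : q' ∈ T.descCl (T.parent (u j)) :=
    T.descCl_trans hdj ⟨(H.hu j hj).2, 1, by simp⟩
  have harc : T.Arc h (T.parent (u (t - 1))) q' := by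
    rcases H.parent_two hyp hj with hA | hU
    · -- parent (u j) = A
      by_cases hAU : T.parent (u 0) = T.parent (u (t - 1))
      · left
        rw [hA, hAU] at hq'pj
        exact ⟨hq'pj, fun hh => hne hh.symm⟩
      · have hnlc : T.Nlc (T.parent (u (t - 1))) (T.parent (u 0)) := by
          rcases hyp with h' | h'
          · exact absurd h' hAU
          · exact h'
        have hL2 : 2 ≤ T.level (u 0) := by
          by_contra hL1
          push_neg at hL1
          have hA0 : T.parent (u 0) = 0 :=
            T.eq_zero_of_level_zero (T.parent_lt_N (H.hu 0 ht).2) (by omega)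
          have hU0 : T.parent (u (t - 1)) = 0 :=
            T.eq_zero_of_level_zero hUN (by omega)
          exact hAU (by rw [hA0, hU0])
        have hA0 : 0 < T.parent (u 0) := by
          rcases Nat.eq_zero_or_pos (T.parent (u 0)) with h0 | h0
          · rw [h0, T.level_zero] at hAlev; omega
          · exact h0
        have hU0 : 0 < T.parent (u (t - 1)) := by
          rcases Nat.eq_zero_or_pos (T.parent (u (t - 1))) with h0 | h0
          · rw [h0, T.level_zero] at hUlev; omega
          · exact h0
        have hsdA : T.StrictDesc (T.parent (u 0)) q' := by
          rw [hA] at hq'pj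
          exact ⟨hq'pj, by omega⟩
        by_cases hsib : T.parent (T.parent (u 0)) = T.parent (T.parent (u (t - 1)))
        · -- G2 : A is a left sibling of U
          right; left
          exact ⟨T.parent (u 0), ⟨hA0, hnlc.1, hsib⟩, Or.inr hsdA⟩
        · -- G3 : parent A = l(parent U)
          right; right; left
          have hAN : T.parent (u 0) < N := T.parent_lt_N (H.hu 0 ht).2
          have hpA : T.parent (T.parent (u 0)) ≤ T.parent (T.parent (u (t - 1))) :=
            T.parent_mono hUN hnlc.1.le hnlc.2.1
          have hlevpa := T.level_parent hA0 hAN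
          have hlevpu := T.level_parent hU0 hUN
          have hnlcp : T.Nlc (T.parent (T.parent (u (t - 1))))
              (T.parent (T.parent (u 0))) := by
            refine ⟨lt_of_le_of_ne hpA hsib, by omega, ?_⟩
            intro c hc1 hc2 hc3
            have hcN : c < N := lt_trans (lt_of_lt_of_le hc2
              (T.parent_le' hUN)) hUN
            exact no_between_anc hT hUN hnlc 1 c hcN (by omega)
              (by simp only [Function.iterate_one]; exact hc1)
              (by simp only [Function.iterate_one]; exact hc2)
          refine ⟨hU0, T.parent (T.parent (u 0)), hnlcp, Or.inr ?_⟩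
          refine ⟨T.descCl_trans hsdA.1 ⟨hAN, 1, by simp⟩, ?_⟩
          have := T.parent_lt _ hA0 hAN
          omega
    · -- parent (u j) = U : G1
      left
      rw [hU] at hq'pj
      exact ⟨hq'pj, fun hh => hne hh.symm⟩
  simp only [DFSTree.graph, SimpleGraph.fromRel_adj]
  exact ⟨hne, Or.inl ⟨hUN, hq'N, harc⟩⟩


/-- Transfer of arcs of `G^h_{T*}` between images of `Q`-vertices to arcs of `G^h_T`. -/
lemma MS.arc_transfer (H : MS T t u Q) (hT : T.IsKSTree K s)
    (he : ∀ q, e q = 1 + (Q ∩ Set.Iio q).ncard) (hM : M = Q.ncard + 1)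
    (hp : ∀ q ∈ Q, Ts.parent (e q) = if T.parent q ∈ Q then e (T.parent q) else 0)
    (hyp : T.parent (u 0) = T.parent (u (t - 1)) ∨
      T.Nlc (T.parent (u (t - 1))) (T.parent (u 0)))
    (h : ℕ) {q q' : ℕ} (hq : q ∈ Q) (hq' : q' ∈ Q)
    (harc : Ts.Arc h (e q) (e q')) : T.Arc h q q' := by
  have ht := H.ht
  have ht1 : t - 1 < t := by omega
  have hqN := H.q_lt_N hq
  have hq'N := H.q_lt_N hq'
  rcases harc with h1 | ⟨s0, hsib, htar⟩ | ⟨hpos, s0, hnlc0, htar⟩ | h4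
  · -- G1
    obtain ⟨w, hwQ, hxe, hsd⟩ := H.sdesc_inv he hM hp hq h1
    rw [show q' = w from H.einj he hq' hwQ hxe]
    exact Or.inl hsd
  · -- G2
    obtain ⟨hs0pos, hs0lt, hs0par⟩ := hsib
    have hs0M : s0 < M := lt_trans hs0lt (H.eltM he hM hq)
    obtain ⟨w, hwQ, rfl⟩ := H.esurj he (m := s0) (by omega) (by omega)
    have hwq : w < q := (H.elt_iff he hwQ hq).mp hs0lt
    have htarT : q' = w ∨ T.StrictDesc w q' := by
      rcases htar with hh | hh
      · exact Or.inl (H.einj he hq' hwQ hh)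
      · obtain ⟨w2, hw2Q, hxe, hsd⟩ := H.sdesc_inv he hM hp hwQ hh
        rw [H.einj he hq' hw2Q hxe]
        exact Or.inr hsd
    by_cases hpq : T.parent q ∈ Q
    · have hparw : T.parent w = T.parent q := by
        rw [hp q hq, if_pos hpq] at hs0par
        rw [hp w hwQ] at hs0par
        by_cases hpw : T.parent w ∈ Q
        · rw [if_pos hpw] at hs0par
          exact H.einj he hpw hpq hs0par
        · rw [if_neg hpw] at hs0par
          have := MS.epos he (T.parent q)
          omega
      exact Or.inr (Or.inl ⟨w, ⟨H.q_pos hwQ, hwq, hparw⟩, htarT⟩)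
    · rw [hp q hq, if_neg hpq] at hs0par
      rw [hp w hwQ] at hs0par
      have hpw : T.parent w ∉ Q := by
        by_cases hh : T.parent w ∈ Q
        · rw [if_pos hh] at hs0par
          have := MS.epos he (T.parent w)
          omega
        · exact hh
      have hq'descw : q' ∈ T.descCl w := by
        rcases htarT with rfl | hh
        · exact T.mem_descCl_self hq'N
        · exact hh.1
      by_cases hpp : T.parent w = T.parent q
      · exact Or.inr (Or.inl ⟨w, ⟨H.q_pos hwQ, hwq, hpp⟩, htarT⟩)
      · obtain ⟨i, hi, hqi⟩ := (H.parentQ_iff hq).mp hpq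
        obtain ⟨j, hj, hwj⟩ := (H.parentQ_iff hwQ).mp hpw
        have hji : j < i := by
          by_contra hge
          push_neg at hge
          have := H.umono hge hj
          omega
        have hple : T.parent w ≤ T.parent q := by
          rw [hqi, hwj]
          exact H.parent_le_parent (le_of_lt hji) hi
        have hnlcUA : T.Nlc (T.parent (u (t - 1))) (T.parent (u 0)) := by
          rcases hyp with h' | h'
          · exfalso
            apply hpp
            rw [hqi, hwj]
            rcases H.parent_two (Or.inl h') hi with ha | ha <;>
              rcases H.parent_two (Or.inl h') hj with hb | hb <;> omega
          · exact h'
        have hpqU : T.parent q = T.parent (u (t - 1)) := by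
          rw [hqi]
          rcases H.parent_two hyp hi with ha | ha
          · exfalso
            apply hpp
            rw [hqi, hwj] at hple ⊢
            rcases H.parent_two hyp hj with hb | hb
            · omega
            · have := hnlcUA.1
              omega
          · exact ha
        have hpwA : T.parent w = T.parent (u 0) := by
          rw [hwj]
          rcases H.parent_two hyp hj with hb | hb
          · exact hb
          · exfalso
            rw [hqi, hwj] at hple
            have h7 := hnlcUA.1
            rcases H.parent_two hyp hi with ha | ha
            · omega
            · exact hpp (by rw [hwj, hqi, hb, ha])
        refine Or.inr (Or.inr (Or.inl ⟨H.q_pos hq, T.parent (u 0),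
          by rw [hpqU]; exact hnlcUA, Or.inr ?_⟩))
        have hwdesc : w ∈ T.descCl (T.parent w) := ⟨H.q_lt_N hwQ, 1, by simp⟩
        refine ⟨by rw [← hpwA]; exact T.descCl_trans hq'descw hwdesc, ?_⟩
        have h5 : T.parent w < w := T.parent_lt w (H.q_pos hwQ) (H.q_lt_N hwQ)
        have h6 : w ≤ q' := T.le_of_mem_descCl hq'descw
        rw [← hpwA]
        omega
  · -- G3
    by_cases hpq : T.parent q ∈ Q
    · rw [hp q hq, if_pos hpq] at hnlc0
      obtain ⟨w, hwQ, hxe, hnw⟩ := H.nlc_inv he hM hp hpq hnlc0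
      refine Or.inr (Or.inr (Or.inl ⟨H.q_pos hq, w, hnw, ?_⟩))
      rcases htar with hh | hh
      · rw [hxe] at hh
        exact Or.inl (H.einj he hq' hwQ hh)
      · rw [hxe] at hh
        obtain ⟨w2, hw2Q, hxe2, hsd⟩ := H.sdesc_inv he hM hp hwQ hh
        rw [H.einj he hq' hw2Q hxe2]
        exact Or.inr hsd
    · rw [hp q hq, if_neg hpq] at hnlc0
      exact absurd hnlc0.1 (by omega)
  · -- G4
    have hlq := H.levE he hM hp q hq
    have hlq' := H.levE he hM hp q' hq'
    rcases H.iterD he hM hp hq h with ⟨hinQ, hPe⟩ | ⟨hlevP, hP0⟩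
    · rw [hPe] at h4
      rcases h4 with h4a | h4b | h4c | ⟨h4d, hlev'⟩
      · exact Or.inr (Or.inr (Or.inr (Or.inl (H.einj he hq' hinQ h4a))))
      · obtain ⟨w, hwQ, hxe, hnw⟩ := H.nlc_inv he hM hp hinQ h4b
        rw [show q' = w from H.einj he hq' hwQ hxe]
        exact Or.inr (Or.inr (Or.inr (Or.inr (Or.inl hnw))))
      · obtain ⟨w, hwQ, hxe, hnw⟩ := H.nrc_inv he hM hp hinQ h4c
        rw [show q' = w from H.einj he hq' hwQ hxe]
        exact Or.inr (Or.inr (Or.inr (Or.inr (Or.inr (Or.inl hnw)))))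
      · have hlevT : T.level q' ≤ T.level q := by omega
        refine Or.inr (Or.inr (Or.inr (Or.inr (Or.inr (Or.inr
          ⟨?_, hlevT⟩)))))
        rcases h4d with ⟨s1, hnl, hsd⟩ | hsd | ⟨s1, hnr, hsd⟩
        · obtain ⟨w, hwQ, rfl, hnw⟩ := H.nlc_inv he hM hp hinQ hnl
          obtain ⟨w2, hw2Q, hxe2, hsd2⟩ := H.sdesc_inv he hM hp hwQ hsd
          rw [show q' = w2 from H.einj he hq' hw2Q hxe2]
          exact Or.inl ⟨w, hnw, hsd2⟩
        · obtain ⟨w2, hw2Q, hxe2, hsd2⟩ := H.sdesc_inv he hM hp hinQ hsd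
          rw [show q' = w2 from H.einj he hq' hw2Q hxe2]
          exact Or.inr (Or.inl hsd2)
        · obtain ⟨w, hwQ, rfl, hnw⟩ := H.nrc_inv he hM hp hinQ hnr
          obtain ⟨w2, hw2Q, hxe2, hsd2⟩ := H.sdesc_inv he hM hp hwQ hsd
          rw [show q' = w2 from H.einj he hq' hw2Q hxe2]
          exact Or.inr (Or.inr ⟨w, hnw, hsd2⟩)
    · rw [hP0] at h4
      have hq'0 : 1 ≤ e q' := MS.epos he q'
      have hlevT : T.level q' ≤ T.level q := by
        rcases h4 with h4a | h4b | h4c | ⟨h4d, hlev'⟩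
        · omega
        · exact absurd h4b.1 (by omega)
        · exfalso
          have h5 := h4c.2.2.1
          rw [Ts.level_zero] at h5
          exact H.levE_ne0 he hM hp hq' h5
        · omega
      refine Or.inr (Or.inr (Or.inr (Or.inr (Or.inr (Or.inr
        ⟨?_, hlevT⟩)))))
      by_cases hbig : T.level q ≤ h
      · have hp0 : T.parent^[h] q = 0 := T.iter_of_level_le hqN hbig
        rw [hp0]
        exact Or.inr (Or.inl ⟨⟨hq'N, T.level q', T.iter_level hq'N⟩,
          by have := H.q_pos hq'; omega⟩)
      · push_neg at hbig
        obtain ⟨i, hi, hdi⟩ := H.memQ.mp hq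
        obtain ⟨j, hj, hdj⟩ := H.memQ.mp hq'
        obtain ⟨-, k, hk⟩ := hdi
        have hui0 : u i ≠ 0 := by have := (H.hu i hi).1; omega
        have hkval : T.level (u i) + k = T.level q :=
          T.level_add_of_mem_descCl hqN hk hui0
        have hlui := H.levu hi
        have hluj := H.levu hj
        have hLq := H.lev_ge hq
        have hLq' := H.lev_ge hq'
        have hlevp : T.level (T.parent^[h] q) + h = T.level q :=
          T.level_iter_add hqN (le_of_lt hbig)
        have hhk : k + 1 ≤ h := by omega
        set d := h - k - 1 with hd
        have hpi : T.parent^[h] q = T.parent^[d] (T.parent (u i)) := by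
          have h1 : h = d + (k + 1) := by omega
          rw [h1, Function.iterate_add_apply, Function.iterate_succ_apply', hk]
        have hpj_lev := H.parent_lev hj
        have hpi_lev := H.parent_lev hi
        have hdlev : d ≤ T.level (T.parent (u i)) := by omega
        have hPq_lev : T.level (T.parent^[d] (T.parent (u i))) + d =
            T.level (T.parent (u i)) :=
          T.level_iter_add (T.parent_lt_N (H.hu i hi).2) hdlev
        have hPb_lev : T.level (T.parent^[d] (T.parent (u j))) + d =
            T.level (T.parent (u j)) :=
          T.level_iter_add (T.parent_lt_N (H.hu j hj).2) (by omega)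
        have hq'b : q' ∈ T.descCl (T.parent^[d] (T.parent (u j))) := by
          have hb1 : u j ∈ T.descCl (T.parent (u j)) := ⟨(H.hu j hj).2, 1, by simp⟩
          have hb2 : T.parent (u j) ∈ T.descCl (T.parent^[d] (T.parent (u j))) :=
            ⟨T.parent_lt_N (H.hu j hj).2, d, rfl⟩
          exact T.descCl_trans (T.descCl_trans hdj hb1) hb2
        have hq'neb : q' ≠ T.parent^[d] (T.parent (u j)) := by
          intro heq
          rw [← heq] at hPb_lev
          omega
        by_cases hpb : T.parent^[d] (T.parent (u i)) = T.parent^[d] (T.parent (u j))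
        · rw [hpi, hpb]
          exact Or.inr (Or.inl ⟨hq'b, hq'neb⟩)
        · have hnlcUA : T.Nlc (T.parent (u (t - 1))) (T.parent (u 0)) := by
            rcases hyp with h' | h'
            · exfalso
              apply hpb
              have hiter : T.parent^[d] (T.parent (u 0)) =
                  T.parent^[d] (T.parent (u (t - 1))) := by rw [h']
              rcases H.parent_two (Or.inl h') hi with ha | ha <;>
                rcases H.parent_two (Or.inl h') hj with hb | hb <;>
                rw [ha, hb] <;> simp [hiter]
            · exact h'
          have hUN : T.parent (u (t - 1)) < N := T.parent_lt_N (H.hu _ ht1).2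
          have hAN : T.parent (u 0) < N := T.parent_lt_N (H.hu 0 ht).2
          have hlevA := H.parent_lev (show 0 < t from ht)
          have hlevU := H.parent_lev ht1
          have hmono := T.iter_mono hUN hnlcUA.1.le hnlcUA.2.1 d
          have hβlev : T.level (T.parent^[d] (T.parent (u (t - 1)))) + d =
              T.level (T.parent (u (t - 1))) := T.level_iter_add hUN (by omega)
          have hβN : T.parent^[d] (T.parent (u (t - 1))) < N :=
            T.iter_lt_N d hUN
          have hbetween : ∀ c, T.parent^[d] (T.parent (u 0)) < c →
              c < T.parent^[d] (T.parent (u (t - 1))) →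
              T.level c = T.level (T.parent^[d] (T.parent (u (t - 1)))) →
              False := by
            intro c hc1 hc2 hc3
            have hcN : c < N := lt_trans hc2 hβN
            exact no_between_anc hT hUN hnlcUA d c hcN (by omega) hc1 hc2
          rcases H.parent_two hyp hi with ha | ha <;>
            rcases H.parent_two hyp hj with hb | hb
          · exact absurd (by rw [ha, hb]) hpb
          · -- p_i = A, p_j = U : Nrc α β
            rw [hpi, ha]
            have hαβ : T.parent^[d] (T.parent (u 0)) <
                T.parent^[d] (T.parent (u (t - 1))) := by
              rcases eq_or_lt_of_le hmono.1 with hh | hh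
              · exact absurd hh (by rw [← ha, ← hb]; exact hpb)
              · exact hh
            refine Or.inr (Or.inr ⟨T.parent^[d] (T.parent (u (t - 1))),
              ⟨hαβ, hβN, hmono.2.symm, ?_⟩, ?_⟩)
            · intro c hc1 hc2 hcc
              exact hbetween c hc1 hc2 (hcc.trans hmono.2)
            · rw [← hb]
              exact ⟨hq'b, hq'neb⟩
          · -- p_i = U, p_j = A : Nlc β α
            rw [hpi, ha]
            have hαβ : T.parent^[d] (T.parent (u 0)) <
                T.parent^[d] (T.parent (u (t - 1))) := by
              rcases eq_or_lt_of_le hmono.1 with hh | hh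
              · exact absurd hh.symm (by rw [← ha, ← hb]; exact hpb)
              · exact hh
            refine Or.inl ⟨T.parent^[d] (T.parent (u 0)),
              ⟨hαβ, hmono.2, ?_⟩, ?_⟩
            · intro c hc1 hc2 hcc
              exact hbetween c hc1 hc2 hcc
            · rw [← hb]
              exact ⟨hq'b, hq'neb⟩
          · exact absurd (by rw [ha, hb]) hpb

end PartTwo

end Merge

/-- The merging lemma. Let `T` be a `(K,s)`-tree and `u 0, …, u (t-1)` vertices with
`u (i+1) = r (u i)`. Let `Q = D[u 0] ∪ … ∪ D[u (t-1)]` and let `T*` be the tree obtained from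
the forest induced on `Q` by adding a new root whose children are `u 0, …, u (t-1)`; in our
encoding `T*` is the `DFSTree` on `Q.ncard + 1` vertices in which the new root is `0`, the
vertex `q ∈ Q` receives the label `e q = 1 + |Q ∩ [0, q)|`, and parents are inherited from `T`
(vertices of `Q` whose `T`-parent lies outside `Q` become children of the new root). Then:
(1) `T*` is a `(K,s)`-tree; and
(2) if the parent of `u 0` equals the parent `u*` of `u (t-1)`, or equals `l u*`, then for
every `h ≥ 0` the graph `G^h_{T*}` is isomorphic to a subgraph of the induced subgraph of
`G^h_T` on `Q ∪ {u*}`, via the map fixing each `q ∈ Q` and sending the new root to `u*`. -/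
theorem statement12 (N K s : ℕ) (T : DFSTree N) (hT : T.IsKSTree K s)
    (t : ℕ) (ht : 0 < t) (u : ℕ → ℕ)
    (hu : ∀ i, i < t → 0 < u i ∧ u i < N)
    (hchain : ∀ i, i + 1 < t → T.Nrc (u i) (u (i + 1)))
    (Q : Set ℕ) (hQ : Q = ⋃ i ∈ Finset.range t, T.descCl (u i))
    (e : ℕ → ℕ) (he : ∀ q, e q = 1 + (Q ∩ Set.Iio q).ncard)
    (M : ℕ) (hM : M = Q.ncard + 1) :
    ∃ Tstar : DFSTree M,
      (∀ q ∈ Q, (T.parent q ∈ Q → Tstar.parent (e q) = e (T.parent q)) ∧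
                (T.parent q ∉ Q → Tstar.parent (e q) = 0)) ∧
      Tstar.IsKSTree K s ∧
      ((T.parent (u 0) = T.parent (u (t - 1)) ∨
          T.Nlc (T.parent (u (t - 1))) (T.parent (u 0))) →
        ∀ h : ℕ,
          (∀ q q' : ℕ, q ∈ Q → q' ∈ Q →
            (Tstar.graph h).Adj (e q) (e q') → (T.graph h).Adj q q') ∧
          (∀ q ∈ Q, (Tstar.graph h).Adj 0 (e q) →
            (T.graph h).Adj (T.parent (u (t - 1))) q)) := by
  classical
  have H : Merge.MS T t u Q := ⟨ht, hu, hchain, hQ⟩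
  obtain ⟨P, hparE, hPnone⟩ : ∃ P : ℕ → ℕ,
      (∀ q ∈ Q, P (e q) = if T.parent q ∈ Q then e (T.parent q) else 0) ∧
      (∀ j, ¬(∃ q, q ∈ Q ∧ e q = j) → P j = 0) := by
    refine ⟨fun j => if hj : ∃ q, q ∈ Q ∧ e q = j then
      (if T.parent hj.choose ∈ Q then e (T.parent hj.choose) else 0) else 0, ?_, ?_⟩
    · intro q hq
      have hex : ∃ q', q' ∈ Q ∧ e q' = e q := ⟨q, hq, rfl⟩
      simp only [dif_pos hex]
      have hspec := hex.choose_spec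
      rw [H.einj he hspec.1 hq hspec.2]
    · intro j hj
      simp only [dif_neg hj]
  have hP0 : P 0 = 0 := by
    apply hPnone
    rintro ⟨q, hq, heq⟩
    have := Merge.MS.epos he q
    omega
  have hPlt : ∀ j, 0 < j → j < M → P j < j := by
    intro j hj0 hjM
    obtain ⟨q, hq, rfl⟩ := H.esurj he (m := j) (by omega) (by omega)
    rw [hparE q hq]
    by_cases hpq : T.parent q ∈ Q
    · rw [if_pos hpq]
      exact H.estrict he hpq (T.parent_lt q (H.q_pos hq) (H.q_lt_N hq))
    · rw [if_neg hpq]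
      exact hj0
  have hPterm : ∀ j, j < M → ∃ k, P^[k] j = 0 := by
    intro j
    induction j using Nat.strong_induction_on with
    | _ j ih =>
      intro hjM
      rcases Nat.eq_zero_or_pos j with rfl | hj0
      · exact ⟨0, rfl⟩
      · obtain ⟨k, hk⟩ := ih (P j) (hPlt j hj0 hjM)
          (lt_trans (hPlt j hj0 hjM) hjM)
        exact ⟨k + 1, by rw [Function.iterate_succ_apply]; exact hk⟩
  have hchainP : ∀ j, 0 < j → j < M → ∃ k, P^[k] (j - 1) = P j := by
    intro j hj0 hjM
    obtain ⟨q, hq, rfl⟩ := H.esurj he (m := j) (by omega) (by omega)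
    rw [hparE q hq]
    by_cases hpq : T.parent q ∈ Q
    · rw [if_pos hpq]
      have hplt : T.parent q < q := T.parent_lt q (H.q_pos hq) (H.q_lt_N hq)
      have h2 : 2 ≤ e q := by
        have h3 := H.estrict he hpq hplt
        have h4 := Merge.MS.epos he (T.parent q)
        omega
      obtain ⟨q1, hq1, heq1⟩ := H.esurj he (m := e q - 1) (by omega)
        (by have := H.ele he hq; omega)
      have hq1lt : q1 < q := (H.elt_iff he hq1 hq).mp (by omega)
      have hple : T.parent q ≤ q1 := by
        by_contra hgt
        push_neg at hgt
        have h5 := H.estrict he hq1 hgt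
        have h6 := H.estrict he hpq hplt
        omega
      have hqdesc : q ∈ T.descCl (T.parent q) := ⟨H.q_lt_N hq, 1, by simp⟩
      have hq1desc := T.mem_descCl_of_between q hqdesc hple (le_of_lt hq1lt)
      obtain ⟨-, k, hk⟩ := hq1desc
      refine ⟨k, ?_⟩
      rw [show e q - 1 = e q1 by omega,
        H.iterPe hparE k q1 hq1 (by rw [hk]; exact hpq), hk]
    · rw [if_neg hpq]
      exact hPterm (e q - 1) (by omega)
  set Tstar : DFSTree M := ⟨P, hP0, hPlt, hchainP⟩ with hTstar
  have hparE' : ∀ q ∈ Q,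
      Tstar.parent (e q) = if T.parent q ∈ Q then e (T.parent q) else 0 :=
    fun q hq => hparE q hq
  refine ⟨Tstar, ?_, H.star_ks he hM hparE' hT, ?_⟩
  · intro q hq
    constructor
    · intro hpq
      rw [hparE' q hq, if_pos hpq]
    · intro hpq
      rw [hparE' q hq, if_neg hpq]
  · intro hyp h
    constructor
    · intro q q' hq hq' hadj
      simp only [DFSTree.graph, SimpleGraph.fromRel_adj] at hadj
      obtain ⟨hne, hrel⟩ := hadj
      have hne' : q ≠ q' := fun hh => hne (by rw [hh])
      simp only [DFSTree.graph, SimpleGraph.fromRel_adj]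
      refine ⟨hne', ?_⟩
      rcases hrel with ⟨-, -, harc⟩ | ⟨-, -, harc⟩
      · exact Or.inl ⟨H.q_lt_N hq, H.q_lt_N hq',
          H.arc_transfer hT he hM hparE' hyp h hq hq' harc⟩
      · exact Or.inr ⟨H.q_lt_N hq', H.q_lt_N hq,
          H.arc_transfer hT he hM hparE' hyp h hq' hq harc⟩
    · intro q hq _
      exact H.root_adj hT hyp h hq
end

section
/- Let x > y ≥ 2 be integers with x ≤ 4y. Let T'₀ be a tree with a vertex w such that the collection {C_1, …, C_p} of all w-components of T'₀ is (x,y)-critical and |C_1| ≤ … ≤ |C_p|, and let w_1 be the unique neighbour of w in C_1. Then there exist a vertex w' ∈ C_1 and a (possibly empty) collection {C'_1, …, C'_{p'}} of w'-components of the induced forest of T'₀ on C_1 such that w_1 ∉ C' (where C' = C'_1 ∪ … ∪ C'_{p'}), and at least one of the following holds: (a) x ≤ |V(T'₀)| − |C'| − 1 ≤ x + y − 2; or (b) x ≤ |C_2 ∪ … ∪ C_p| + 2 + |C'| ≤ x + y − 2. -/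
namespace SimpleGraph

variable {V : Type*} {G : SimpleGraph V} {s t : Set V} {u v c : V}

/-- `G.induce s` as a graph on all of `V`: the vertices outside `s` become isolated. -/
abbrev restrictTo (G : SimpleGraph V) (s : Set V) : SimpleGraph V where
  Adj a b := a ∈ s ∧ b ∈ s ∧ G.Adj a b
  symm := ⟨fun _ _ h => ⟨h.2.1, h.1, h.2.2.symm⟩⟩
  loopless := ⟨fun _ h => h.2.2.ne rfl⟩

lemma mem_of_reachable_restrictTo (h : (G.restrictTo s).Reachable u v) (hv : v ∈ s) : u ∈ s := by
  obtain ⟨_ | ⟨huv, _⟩⟩ := h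
  exacts [hv, huv.1]

lemma Reachable.restrictTo_of_forall (h : (G.restrictTo s).Reachable u v)
    (ht : ∀ z ∈ s, (G.restrictTo s).Reachable z v → z ∈ t) : (G.restrictTo t).Reachable u v := by
  obtain ⟨p⟩ := h
  induction p with
  | nil => rfl
  | cons hab p ih =>
    have hab' : (G.restrictTo t).Adj _ _ := ⟨ht _ hab.1 ⟨.cons hab p⟩, ht _ hab.2.1 ⟨p⟩, hab.2.2⟩
    exact hab'.reachable.trans (ih ht)

lemma exists_adj_reachable_restrictTo_diff (h : (G.restrictTo s).Reachable v u) (hvu : v ≠ u) :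
    ∃ c, G.Adj v c ∧ (G.restrictTo (s \ {v})).Reachable c u := by
  obtain ⟨p⟩ := h.symm
  clear h
  induction p with
  | nil => exact absurd rfl hvu
  | @cons a b w hab p ih =>
    by_cases hbw : b = w
    · subst hbw
      exact ⟨a, hab.2.2.symm, .rfl⟩
    · obtain ⟨c, hwc, hcb⟩ := ih (Ne.symm hbw)
      have hba : (G.restrictTo (s \ {w})).Adj b a :=
        ⟨⟨hab.2.1, hbw⟩, ⟨hab.1, Ne.symm hvu⟩, hab.2.2.symm⟩
      exact ⟨c, hwc, hcb.trans hba.reachable⟩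

lemma reachable_induce_iff {a b : s} :
    (G.induce s).Reachable a b ↔ (G.restrictTo s).Reachable a b := by
  refine ⟨fun h => h.map (⟨Subtype.val, fun {a b} hab => ⟨a.2, b.2, hab⟩⟩ :
    G.induce s →g G.restrictTo s), fun ⟨p⟩ => ?_⟩
  obtain ⟨a, ha⟩ := a
  obtain ⟨b, hb⟩ := b
  dsimp only at p
  induction p with
  | nil => rfl
  | cons hab p ih =>
    have hab' : (G.induce s).Adj ⟨_, hab.1⟩ ⟨_, hab.2.1⟩ := hab.2.2
    exact hab'.reachable.trans (ih _ hb ⟨p⟩)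

/-- Edges inside `s` avoid the vertex `v ∉ s`, so a second route from `u` to `c` would show that
the edge `vc` of the forest is not a bridge. -/
lemma IsAcyclic.not_reachable_restrictTo (hG : G.IsAcyclic) (hv : v ∉ s) (hvz : G.Adj v u)
    (hvc : G.Adj v c) (huc : u ≠ c) : ¬ (G.restrictTo s).Reachable u c := by
  intro h
  refine isAcyclic_iff_forall_adj_isBridge.mp hG hvc ?_
  refine Adj.reachable (deleteEdges_adj.mpr ⟨hvz, by simp [huc, hvz.ne']⟩) |>.trans (h.mono ?_)
  intro a b hab
  refine deleteEdges_adj.mpr ⟨hab.2.2, ?_⟩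
  rintro h
  simp only [Set.mem_singleton_iff, Sym2.eq_iff] at h
  rcases h with ⟨rfl, -⟩ | ⟨-, rfl⟩
  exacts [hv hab.1, hv hab.2.1]

lemma image_val_supp_connectedComponentMk (a : s) :
    Subtype.val '' ((G.induce s).connectedComponentMk a).supp =
      {u | (G.restrictTo s).Reachable u a} := by
  ext u
  constructor
  · rintro ⟨b, hb, rfl⟩
    rw [ConnectedComponent.mem_supp_iff, ConnectedComponent.eq] at hb
    exact reachable_induce_iff.mp hb
  · intro hu
    refine ⟨⟨u, mem_of_reachable_restrictTo hu a.2⟩, ?_, rfl⟩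
    rw [ConnectedComponent.mem_supp_iff, ConnectedComponent.eq]
    exact reachable_induce_iff.mpr hu

end SimpleGraph

open Function in
lemma Set.ncard_iUnion_eq_ncard_add_ncard_biUnion_ne {ι α : Type*} [Finite α] {C : ι → Set α}
    (hC : Pairwise (Disjoint on C)) (i : ι) :
    (⋃ j, C j).ncard = (C i).ncard + (⋃ j ∈ {j | j ≠ i}, C j).ncard := by
  have hsplit : ⋃ j, C j = C i ∪ ⋃ j ∈ {j | j ≠ i}, C j := by
    ext u
    simp only [Set.mem_iUnion, Set.mem_union, Set.mem_ofPred_eq]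
    grind
  rw [hsplit]
  exact Set.ncard_union_eq (Set.disjoint_iUnion₂_right.mpr fun j hj => hC (Ne.symm hj))

section Components

open SimpleGraph

variable {V : Type*} {G : SimpleGraph V} {S D D' : Set V} {w u u' : V}

lemma delComp_iff_s13 :
    DelComp G S w D ↔ ∃ k ∈ S \ {w}, D = {u | (G.restrictTo (S \ {w})).Reachable u k} := by
  constructor
  · rintro ⟨c, rfl⟩
    induction c using ConnectedComponent.ind with
    | h a => exact ⟨a, a.2, image_val_supp_connectedComponentMk a⟩
  · rintro ⟨k, hk, rfl⟩
    exact ⟨_, (image_val_supp_connectedComponentMk ⟨k, hk⟩).symm⟩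

lemma exists_delComp_mem (hu : u ∈ S \ {w}) : ∃ D, DelComp G S w D ∧ u ∈ D :=
  ⟨_, delComp_iff_s13.mpr ⟨u, hu, rfl⟩, Reachable.rfl⟩

lemma DelComp.subset (h : DelComp G S w D) : D ⊆ S \ {w} := by
  obtain ⟨c, rfl⟩ := h
  exact Set.image_subset_range _ _ |>.trans Subtype.range_coe.subset

lemma DelComp.disjoint (h : DelComp G S w D) (h' : DelComp G S w D') (hne : D ≠ D') :
    Disjoint D D' := by
  obtain ⟨c, rfl⟩ := h
  obtain ⟨c', rfl⟩ := h'
  exact (Set.disjoint_image_iff Subtype.val_injective).mpr <|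
    pairwise_disjoint_supp_connectedComponent _ fun hcc => hne (hcc ▸ rfl)

lemma DelComp.reachable_restrictTo (h : DelComp G S w D) (hu : u ∈ D) (hu' : u' ∈ D) :
    (G.restrictTo D).Reachable u u' := by
  obtain ⟨k, -, rfl⟩ := delComp_iff_s13.mp h
  exact (hu.trans hu'.symm).restrictTo_of_forall fun z _ hz => hz.trans hu'

lemma iUnion_eq_sdiff_singleton_of_delComp {ι : Type*} {C : ι → Set V}
    (hcomp : ∀ i, DelComp G S w (C i)) (hall : ∀ D, DelComp G S w D → ∃ i, D = C i) :
    ⋃ i, C i = S \ {w} := by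
  refine subset_antisymm (Set.iUnion_subset fun i => (hcomp i).subset) fun u hu => ?_
  obtain ⟨D, hD, huD⟩ := exists_delComp_mem (G := G) hu
  obtain ⟨i, rfl⟩ := hall D hD
  exact Set.mem_iUnion_of_mem i huD

end Components

namespace SimpleGraph

variable {V : Type*} {G : SimpleGraph V} {s : Set V} {r v c k : V}

variable (G s r) in
/-- The union of the `v`-components of `s` that do not contain `r`. -/
def beyond (v : V) : Set V :=
  {u | u ∈ s \ {v} ∧ ¬ (G.restrictTo (s \ {v})).Reachable u r}

lemma beyond_self : G.beyond s r r = s \ {r} := by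
  ext u
  refine ⟨And.left, fun hu => ⟨hu, fun h => ?_⟩⟩
  exact (mem_of_reachable_restrictTo h.symm hu).2 rfl

lemma setOf_reachable_subset_beyond (hk : k ∈ G.beyond s r v) :
    {u | (G.restrictTo (s \ {v})).Reachable u k} ⊆ G.beyond s r v :=
  fun _ hu => ⟨mem_of_reachable_restrictTo hu hk.1, fun hur => hk.2 (hu.symm.trans hur)⟩

lemma beyond_eq_biUnion :
    G.beyond s r v = ⋃ k ∈ G.beyond s r v, {u | (G.restrictTo (s \ {v})).Reachable u k} :=
  subset_antisymm (fun _ hk => Set.mem_biUnion hk Reachable.rfl)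
    (Set.iUnion₂_subset fun _ => setOf_reachable_subset_beyond)

/-- Stepping from `v` to a neighbour `c` beyond it shrinks what lies beyond to the component of
`c` minus `c` itself: in a forest, the only way out of that component passes through `v`. -/
lemma beyond_eq_of_adj (hG : G.IsAcyclic)
    (hs : ∀ u ∈ s, ∀ u' ∈ s, (G.restrictTo s).Reachable u u') (hr : r ∈ s) (hv : v ∈ s)
    (hvc : G.Adj v c) (hc : c ∈ G.beyond s r v) :
    G.beyond s r c = {u | (G.restrictTo (s \ {v})).Reachable u c} \ {c} := by
  have transfer : ∀ {z y}, ¬ (G.restrictTo (s \ {v})).Reachable y c →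
      (G.restrictTo (s \ {v})).Reachable z y → (G.restrictTo (s \ {c})).Reachable z y :=
    fun hy hzy => hzy.restrictTo_of_forall fun z hz hz' =>
      ⟨hz.1, fun hzc => hy (Set.mem_singleton_iff.mp hzc ▸ hz').symm⟩
  have from_v : ∀ y ∈ s, ¬ (G.restrictTo (s \ {v})).Reachable y c →
      (G.restrictTo (s \ {c})).Reachable v y := by
    intro y hy hyc
    by_cases hyv : y = v
    · exact hyv ▸ Reachable.rfl
    obtain ⟨c', hvc', hc'y⟩ := exists_adj_reachable_restrictTo_diff (hs v hv y hy) (Ne.symm hyv)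
    have hc' : c' ∈ s \ {v} := mem_of_reachable_restrictTo hc'y ⟨hy, hyv⟩
    have hc'c : c' ≠ c := fun h => hyc (h ▸ hc'y).symm
    have hvc'' : (G.restrictTo (s \ {c})).Adj v c' := ⟨⟨hv, hvc.ne⟩, ⟨hc'.1, hc'c⟩, hvc'⟩
    exact hvc''.reachable.trans (transfer hyc hc'y)
  ext u
  constructor
  · rintro ⟨⟨hus, huc⟩, hur⟩
    refine ⟨?_, huc⟩
    by_contra huD
    exact hur ((from_v u hus huD).symm.trans (from_v r hr fun h => hc.2 h.symm))
  · rintro ⟨hu, huc⟩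
    have hu' : u ∈ s \ {v} := mem_of_reachable_restrictTo hu hc.1
    refine ⟨⟨hu'.1, huc⟩, fun ⟨p⟩ => ?_⟩
    obtain ⟨d, -, hd, hd'⟩ := p.exists_boundary_dart
      {z | (G.restrictTo (s \ {v})).Reachable z c} hu fun h => hc.2 h.symm
    have hd₁ : d.fst ∈ s \ {v} := mem_of_reachable_restrictTo hd hc.1
    have hd₂ : d.snd = v := by
      by_contra hne
      have hd₂₁ : (G.restrictTo (s \ {v})).Adj d.snd d.fst :=
        ⟨⟨d.adj.2.1.1, hne⟩, hd₁, d.adj.2.2.symm⟩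
      exact hd' (hd₂₁.reachable.trans hd)
    exact hG.not_reachable_restrictTo (fun h => h.2 rfl) (hd₂ ▸ d.adj.2.2.symm) hvc d.adj.1.2 hd

lemma exists_le_ncard_beyond_forall_ncard_le [Finite V] (hG : G.IsAcyclic)
    (hs : ∀ u ∈ s, ∀ u' ∈ s, (G.restrictTo s).Reachable u u') (hr : r ∈ s) {m : ℕ}
    (hm : m < s.ncard) :
    ∃ v ∈ s, m ≤ (G.beyond s r v).ncard ∧
      ∀ k ∈ G.beyond s r v, {u | (G.restrictTo (s \ {v})).Reachable u k}.ncard ≤ m := by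
  have hmr : m ≤ (G.beyond s r r).ncard := by
    rw [beyond_self, Set.ncard_sdiff_singleton_of_mem hr]
    omega
  obtain ⟨v, ⟨hv, hmv⟩, hmin⟩ := Set.exists_min_image {v | v ∈ s ∧ m ≤ (G.beyond s r v).ncard}
    (fun v => (G.beyond s r v).ncard) (Set.toFinite _) ⟨r, hr, hmr⟩
  refine ⟨v, hv, hmv, fun k hk => ?_⟩
  by_contra! hlt
  obtain ⟨c, hvc, hck⟩ := exists_adj_reachable_restrictTo_diff (hs v hv k hk.1.1) (Ne.symm hk.1.2)
  set D := {u | (G.restrictTo (s \ {v})).Reachable u c}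
  have hcomp : {u | (G.restrictTo (s \ {v})).Reachable u k} = D :=
    Set.ext fun u => ⟨fun hu => hu.trans hck.symm, fun hu => hu.trans hck⟩
  have hc : c ∈ G.beyond s r v := setOf_reachable_subset_beyond hk hck
  have hbc : (G.beyond s r c).ncard + 1 = D.ncard := by
    rw [beyond_eq_of_adj hG hs hr hv hvc hc]
    exact Set.ncard_sdiff_singleton_add_one (s := D) Reachable.rfl
  have hDv : D.ncard ≤ (G.beyond s r v).ncard :=
    Set.ncard_le_ncard (setOf_reachable_subset_beyond hc)
  rw [hcomp] at hlt
  have := hmin c ⟨hc.1.1, by omega⟩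
  omega

end SimpleGraph

lemma Finset.exists_subset_sum_mem_Icc {ι : Type*} (f : ι → ℕ) {m : ℕ} (s : Finset ι)
    (hle : ∀ i ∈ s, f i ≤ m) (hsum : m ≤ ∑ i ∈ s, f i) :
    ∃ t ⊆ s, ∑ i ∈ t, f i ∈ Set.Icc m (2 * m - 1) := by
  classical
  induction s using Finset.strongInduction with
  | H s ih =>
    by_cases hs : ∑ i ∈ s, f i ≤ 2 * m - 1
    · exact ⟨s, subset_rfl, hsum, hs⟩
    obtain rfl | ⟨i, hi⟩ := s.eq_empty_or_nonempty
    · simp at hs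
    have herase := Finset.sum_erase_add s f hi
    have hfi := hle i hi
    obtain ⟨t, hts, ht⟩ := ih _ (Finset.erase_ssubset hi)
      (fun j hj => hle j (Finset.mem_of_mem_erase hj)) (by omega)
    exact ⟨t, hts.trans (Finset.erase_subset _ _), ht⟩

lemma Finset.ncard_biUnion_eq_sum {α : Type*} [Finite α] (t : Finset (Set α))
    (h : (t : Set (Set α)).PairwiseDisjoint id) : (⋃ D ∈ t, D).ncard = ∑ D ∈ t, D.ncard := by
  rw [← finsum_mem_coe_finset]
  exact Set.Finite.ncard_biUnion t.finite_toSet (fun _ _ => Set.toFinite _) h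

lemma Finset.exists_fin_injective_iUnion_eq {α : Type*} (t : Finset (Set α)) :
    ∃ (n : ℕ) (C : Fin n → Set α), Function.Injective C ∧ (∀ j, C j ∈ t) ∧
      ⋃ j, C j = ⋃ D ∈ t, D := by
  obtain ⟨n, C, hinj, hrange⟩ := t.finite_toSet.fin_param
  refine ⟨n, C, hinj, fun j => Finset.mem_coe.mp (hrange ▸ Set.mem_range_self j), ?_⟩
  rw [← Set.sUnion_range, hrange, Set.sUnion_eq_biUnion]
  rfl

namespace SimpleGraph

variable {V : Type*} {G : SimpleGraph V} {s : Set V} {r : V}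

theorem exists_delComp_family_ncard_mem_Icc [Finite V] (hG : G.IsAcyclic)
    (hs : ∀ u ∈ s, ∀ u' ∈ s, (G.restrictTo s).Reachable u u') (hr : r ∈ s) {m : ℕ}
    (hm : m < s.ncard) :
    ∃ v ∈ s, ∃ (n : ℕ) (C : Fin n → Set V), (∀ j, DelComp G s v (C j)) ∧
      Function.Injective C ∧ r ∉ ⋃ j, C j ∧ (⋃ j, C j).ncard ∈ Set.Icc m (2 * m - 1) := by
  classical
  obtain ⟨v, hv, hmv, hsmall⟩ := exists_le_ncard_beyond_forall_ncard_le hG hs hr hm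
  set comp := fun k => {u | (G.restrictTo (s \ {v})).Reachable u k}
  set 𝒟 := (Set.toFinite (G.beyond s r v)).toFinset.image comp
  have h𝒟 : ∀ D ∈ 𝒟, ∃ k ∈ G.beyond s r v, D = comp k := by
    simp only [𝒟, Finset.mem_image, Set.Finite.mem_toFinset]
    exact fun D ⟨k, hk, hD⟩ => ⟨k, hk, hD.symm⟩
  have hdel : ∀ D ∈ 𝒟, DelComp G s v D ∧ r ∉ D := by
    intro D hD
    obtain ⟨k, hk, rfl⟩ := h𝒟 D hD
    exact ⟨delComp_iff_s13.mpr ⟨k, hk.1, rfl⟩, fun hrk => hk.2 hrk.symm⟩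
  have hsum : ∀ t ⊆ 𝒟, (⋃ D ∈ t, D).ncard = ∑ D ∈ t, D.ncard := fun t ht =>
    t.ncard_biUnion_eq_sum fun D hD D' hD' hne =>
      (hdel D (ht hD)).1.disjoint (hdel D' (ht hD')).1 hne
  have htot : (⋃ D ∈ 𝒟, D) = G.beyond s r v := by
    rw [Finset.set_biUnion_finset_image]
    simp only [Set.Finite.mem_toFinset]
    exact beyond_eq_biUnion.symm
  obtain ⟨t, ht𝒟, ht⟩ := 𝒟.exists_subset_sum_mem_Icc Set.ncard
    (fun D hD => by obtain ⟨k, hk, rfl⟩ := h𝒟 D hD; exact hsmall k hk)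
    (by rw [← hsum 𝒟 subset_rfl, htot]; exact hmv)
  obtain ⟨n, C, hinj, hCt, hU⟩ := t.exists_fin_injective_iUnion_eq
  refine ⟨v, hv, n, C, fun j => (hdel _ (ht𝒟 (hCt j))).1, hinj, ?_, ?_⟩
  · rw [hU]
    simp only [Set.mem_iUnion, not_exists]
    exact fun D hD => (hdel D (ht𝒟 hD)).2
  · rwa [hU, hsum t ht𝒟]

end SimpleGraph

theorem statement13_general (x y : ℕ) (hy : 2 ≤ y) (hyx : y < x) (hx4 : x ≤ 4 * y)
    (V : Type) [Fintype V] (T : SimpleGraph V) (hT : T.IsTree)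
    (w : V) (p : ℕ) (hp : 0 < p) (C : Fin p → Set V)
    (hcomp : ∀ i, DelComp T Set.univ w (C i))
    (hinj : Function.Injective C)
    (hall : ∀ D : Set V, DelComp T Set.univ w D → ∃ i, D = C i)
    (hmono : ∀ i j : Fin p, i ≤ j → (C i).ncard ≤ (C j).ncard)
    (hcrit : CriticalColl x y p C)
    (w1 : V) (hw1 : w1 ∈ C ⟨0, hp⟩) :
    ∃ w' ∈ C ⟨0, hp⟩, ∃ (p' : ℕ) (C' : Fin p' → Set V),
      (∀ j, DelComp T (C ⟨0, hp⟩) w' (C' j)) ∧ Function.Injective C' ∧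
      w1 ∉ ⋃ j, C' j ∧
      ((x ≤ Fintype.card V - (⋃ j, C' j).ncard - 1 ∧
          Fintype.card V - (⋃ j, C' j).ncard - 1 ≤ x + y - 2) ∨
        (x ≤ (⋃ i ∈ {i : Fin p | i ≠ ⟨0, hp⟩}, C i).ncard + 2 + (⋃ j, C' j).ncard ∧
          (⋃ i ∈ {i : Fin p | i ≠ ⟨0, hp⟩}, C i).ncard + 2 + (⋃ j, C' j).ncard ≤
            x + y - 2)) := by
  obtain ⟨hp2, hlow, hhigh, hproper⟩ := hcrit
  have hsplit := Set.ncard_iUnion_eq_ncard_add_ncard_biUnion_ne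
    (fun i j hij => (hcomp i).disjoint (hcomp j) (hinj.ne hij)) ⟨0, hp⟩
  set rest := ⋃ i ∈ {i : Fin p | i ≠ ⟨0, hp⟩}, C i
  have hcardV : (⋃ i, C i).ncard + 1 = Fintype.card V := by
    rw [iUnion_eq_sdiff_singleton_of_delComp hcomp hall,
      Set.ncard_sdiff_singleton_add_one (Set.mem_univ w), Set.ncard_univ, Nat.card_eq_fintype_card]
  have hC0 : (C ⟨0, hp⟩).ncard ≤ rest.ncard :=
    (hmono ⟨0, hp⟩ ⟨1, hp2⟩ (Nat.zero_le 1)).trans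
      (Set.ncard_le_ncard (Set.subset_biUnion_of_mem (u := C) (by simp)))
  have hrest : rest.ncard ≤ x - 2 := by
    have hI := (Finset.compl_ne_univ_iff_nonempty {(⟨0, hp⟩ : Fin p)}).mpr (by simp)
    simpa [rest] using hproper _ hI
  set m := min ((⋃ i, C i).ncard - (x + y - 2)) (x - 2 - rest.ncard)
  obtain ⟨v, hv, p', C', hdel, hinj', hw1', hmC', hC'm⟩ :=
    SimpleGraph.exists_delComp_family_ncard_mem_Icc hT.isAcyclic
      (fun u hu u' hu' => (hcomp _).reachable_restrictTo hu hu') hw1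
      (show m < (C ⟨0, hp⟩).ncard by omega)
  refine ⟨v, hv, p', C', hdel, hinj', hw1', ?_⟩
  omega

/-- Claim about splitting an `(x,y)`-critical collection in a tree `T'₀` (for `x ≤ 4y`):
there are a vertex `w' ∈ C_1` and a collection of `w'`-components of the forest induced on
`C_1`, avoiding `w_1`, satisfying size condition (a) or (b). -/
theorem statement13 (x y : ℕ) (hy : 2 ≤ y) (hyx : y < x) (hx4 : x ≤ 4 * y)
    (V : Type) [Fintype V] (T : SimpleGraph V) (hT : T.IsTree)
    (w : V) (p : ℕ) (hp : 0 < p) (C : Fin p → Set V)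
    (hcomp : ∀ i, DelComp T Set.univ w (C i))
    (hinj : Function.Injective C)
    (hall : ∀ D : Set V, DelComp T Set.univ w D → ∃ i, D = C i)
    (hmono : ∀ i j : Fin p, i ≤ j → (C i).ncard ≤ (C j).ncard)
    (hcrit : CriticalColl x y p C)
    (w1 : V) (hw1 : w1 ∈ C ⟨0, hp⟩) (hadj : T.Adj w w1) :
    ∃ w' ∈ C ⟨0, hp⟩, ∃ (p' : ℕ) (C' : Fin p' → Set V),
      (∀ j, DelComp T (C ⟨0, hp⟩) w' (C' j)) ∧ Function.Injective C' ∧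
      w1 ∉ ⋃ j, C' j ∧
      ((x ≤ Fintype.card V - (⋃ j, C' j).ncard - 1 ∧
          Fintype.card V - (⋃ j, C' j).ncard - 1 ≤ x + y - 2) ∨
        (x ≤ (⋃ i ∈ {i : Fin p | i ≠ ⟨0, hp⟩}, C i).ncard + 2 + (⋃ j, C' j).ncard ∧
          (⋃ i ∈ {i : Fin p | i ≠ ⟨0, hp⟩}, C i).ncard + 2 + (⋃ j, C' j).ncard ≤
            x + y - 2)) :=
  statement13_general x y hy hyx hx4 V T hT w p hp C hcomp hinj hall hmono hcrit w1 hw1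
end

section
/- Let n, k, j be positive integers with ⌊n/j⌋ > k. Then every simple graph G that contains every graph on n vertices of treewidth at most k has at least j·k vertices of degree at least ⌊n/j⌋ − k. -/
/-!
The test graph is a disjoint union of complete split graphs: `j` blocks of `m = ⌊n/j⌋` vertices,
in each of which `k` vertices are joined to all others. Ordering the vertices block by block and
taking as `t`-th bag the vertex `t` together with the `k` dominating vertices of its block gives a
path-decomposition of width `k`. Each of the `j k` dominating vertices has degree at least `m - k`,
and an injective homomorphism into `G` does not decrease degrees.
-/

/-- `G` contains `H`: there is an injective map from the vertices of `H` to those of `G`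
sending adjacent vertices to adjacent vertices. -/
def Contains {α β : Type*} (G : SimpleGraph β) (H : SimpleGraph α) : Prop :=
  ∃ f : α → β, Function.Injective f ∧ ∀ u v : α, H.Adj u v → G.Adj (f u) (f v)

/-- `G` has a tree-decomposition of width at most `k`: bags `B x` indexed by the vertices of a
tree `S`, such that for every vertex `u` of `G` the set of indices whose bag contains `u`
induces a nonempty connected subgraph of `S`, every edge of `G` lies in some bag, and every bag
has at most `k + 1` vertices. -/
def HasTreeDecompWidthLe {V : Type*} (G : SimpleGraph V) (k : ℕ) : Prop :=
  ∃ (ι : Type) (S : SimpleGraph ι) (B : ι → Set V),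
    S.IsTree ∧
    (∀ u : V, (S.induce {x | u ∈ B x}).Connected) ∧
    (∀ u v : V, G.Adj u v → ∃ x, u ∈ B x ∧ v ∈ B x) ∧
    (∀ x, (B x).ncard ≤ k + 1)

open SimpleGraph

lemma Contains.ncard_setOf_le_ncard_neighborSet_le {α β : Type*} [Finite β]
    {G : SimpleGraph β} {H : SimpleGraph α} (hGH : Contains G H) (d : ℕ) :
    {v | d ≤ (H.neighborSet v).ncard}.ncard ≤ {w | d ≤ (G.neighborSet w).ncard}.ncard := by
  obtain ⟨f, hf, hadj⟩ := hGH
  have hdeg (v : α) : (H.neighborSet v).ncard ≤ (G.neighborSet (f v)).ncard :=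
    Set.ncard_le_ncard_of_injOn f (fun w hw ↦ hadj v w hw) hf.injOn
  exact Set.ncard_le_ncard_of_injOn f (fun v hv ↦ le_trans hv (hdeg v)) hf.injOn

lemma pathGraph_isTree (n : ℕ) : (pathGraph (n + 1)).IsTree := by
  rw [isTree_iff_connected_and_card]
  refine ⟨pathGraph_connected n, ?_⟩
  let e (i : Fin n) : (pathGraph (n + 1)).edgeSet :=
    ⟨s(i.castSucc, i.succ), by simp [pathGraph_adj]⟩
  have he : Function.Bijective e := by
    constructor
    · intro a b h
      simp only [e, Subtype.mk.injEq, Sym2.eq_iff, Fin.ext_iff, Fin.val_castSucc,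
        Fin.val_succ] at h
      omega
    · rintro ⟨x, hx⟩
      induction x using Sym2.ind with
      | h u v =>
        rw [mem_edgeSet, pathGraph_adj] at hx
        rcases hx with h | h
        · exact ⟨⟨u, by omega⟩, by simp [e, Fin.ext_iff]; omega⟩
        · exact ⟨⟨v, by omega⟩, by simp [e, Fin.ext_iff]; omega⟩
  simp [← Nat.card_congr (Equiv.ofBijective e he)]

lemma connected_induce_hasse_of_ordConnected {α : Type*} [LinearOrder α] [Finite α]
    {s : Set α} (hs : s.OrdConnected) [Nonempty s] : ((hasse α).induce s).Connected := by
  have hind : (hasse α).induce s = hasse s := by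
    ext a b
    rw [← Subtype.range_coe (s := s)] at hs
    simp only [comap_adj, Function.Embedding.coe_subtype, hasse_adj]
    rw [← hs.apply_covBy_apply_iff (OrderEmbedding.subtype (· ∈ s)),
      ← hs.apply_covBy_apply_iff (OrderEmbedding.subtype (· ∈ s))]
    rfl
  have := Fintype.ofFinite s
  let := Fintype.toLocallyFiniteOrder (α := s)
  let := LinearLocallyFiniteOrder.succOrder s
  rw [hind]
  exact ⟨hasse_preconnected_of_succ s⟩

lemma hasTreeDecompWidthLe_of_monotone {n k : ℕ} (hn : 0 < n) {κ : Type*} [PartialOrder κ]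
    {H : SimpleGraph (Fin n)} {β : Fin n → κ} (hβ : Monotone β) {C : Set (Fin n)}
    (hadj : ∀ u v, H.Adj u v → β u = β v ∧ (u ∈ C ∨ v ∈ C))
    (hC : ∀ b, {i ∈ C | β i = b}.ncard ≤ k) : HasTreeDecompWidthLe H k := by
  obtain ⟨n, rfl⟩ := Nat.exists_eq_add_one_of_ne_zero hn.ne'
  refine ⟨Fin (n + 1), pathGraph (n + 1), fun t ↦ {i ∈ C | β i = β t} ∪ {t},
    pathGraph_isTree n, fun u ↦ ?_, fun u v huv ↦ ?_, fun t ↦ ?_⟩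
  · by_cases hu : u ∈ C
    · have hset : {t | u ∈ {i ∈ C | β i = β t} ∪ {t}} = β ⁻¹' {β u} := by
        ext t
        simp only [Set.mem_ofPred_eq, Set.mem_union, Set.mem_singleton_iff, Set.mem_preimage]
        refine ⟨?_, fun h ↦ Or.inl ⟨hu, h.symm⟩⟩
        rintro (⟨-, h⟩ | rfl)
        exacts [h.symm, rfl]
      have : Nonempty (β ⁻¹' {β u}) := ⟨⟨u, rfl⟩⟩
      rw [hset]
      exact connected_induce_hasse_of_ordConnected (Set.ordConnected_singleton.preimage_mono hβ)
    · have hset : {t | u ∈ {i ∈ C | β i = β t} ∪ {t}} = {u} := by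
        ext t
        simp only [Set.mem_ofPred_eq, Set.mem_union, Set.mem_singleton_iff]
        exact ⟨by rintro (⟨h, -⟩ | rfl) <;> trivial, fun h ↦ Or.inr h.symm⟩
      have : Nonempty ({u} : Set (Fin (n + 1))) := ⟨⟨u, rfl⟩⟩
      rw [hset]
      exact connected_induce_hasse_of_ordConnected Set.ordConnected_singleton
  · obtain ⟨hβuv, hu | hv⟩ := hadj u v huv
    · exact ⟨v, Or.inl ⟨hu, hβuv⟩, Or.inr rfl⟩
    · exact ⟨u, Or.inr rfl, Or.inl ⟨hv, hβuv.symm⟩⟩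
  · refine (Set.ncard_union_le _ _).trans ?_
    rw [Set.ncard_singleton]
    exact Nat.add_le_add_right (hC _) 1

/-- Vertex `i` lies in block `i / m` and dominates it iff `i % m < k`; the vertices from
`m ⌊n/m⌋` on form a truncated last block. -/
def blockSplitGraph (n m k : ℕ) : SimpleGraph (Fin n) :=
  fromRel fun a b ↦ a.val / m = b.val / m ∧ a.val % m < k

lemma hasTreeDecompWidthLe_blockSplitGraph {n : ℕ} (hn : 0 < n) (m k : ℕ) :
    HasTreeDecompWidthLe (blockSplitGraph n m k) k := by
  refine hasTreeDecompWidthLe_of_monotone hn (β := fun i ↦ i.val / m)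
    (C := {i | i.val % m < k}) (fun a b hab ↦ Nat.div_le_div_right hab) ?_ fun b ↦ ?_
  · rintro u v ⟨-, ⟨huv, hu⟩ | ⟨hvu, hv⟩⟩
    · exact ⟨huv, Or.inl hu⟩
    · exact ⟨hvu.symm, Or.inr hv⟩
  · have hinj : Set.InjOn (fun i : Fin n ↦ i.val % m) {i | i.val % m < k ∧ i.val / m = b} := by
      rintro x ⟨-, hx⟩ y ⟨-, hy⟩ hxy
      apply Fin.ext
      rw [← Nat.div_add_mod x.val m, ← Nat.div_add_mod y.val m]
      simp_all
    simpa using Set.ncard_le_ncard_of_injOn _ (fun i hi ↦ hi.1) hinj (Set.finite_Iio k)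

lemma sub_le_ncard_neighborSet_blockSplitGraph {n m k : ℕ} {v : Fin n} (hv : v.val % m < k)
    (hfull : m * (v.val / m) + m ≤ n) :
    m - k ≤ ((blockSplitGraph n m k).neighborSet v).ncard := by
  rcases le_or_gt m k with hmk | hkm
  · simp [Nat.sub_eq_zero_of_le hmk]
  let w (q : Fin (m - k)) : Fin n := ⟨m * (v.val / m) + (k + q.val), by omega⟩
  have hw (q : Fin (m - k)) : w q ∈ (blockSplitGraph n m k).neighborSet v := by
    have hdm : (w q).val / m = v.val / m ∧ (w q).val % m = k + q.val := by
      rw [Nat.div_mod_unique (by omega)]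
      exact ⟨by simp only [w]; ring, by omega⟩
    rw [mem_neighborSet, blockSplitGraph, fromRel_adj]
    refine ⟨fun h ↦ ?_, Or.inl ⟨hdm.1.symm, hv⟩⟩
    rw [h, hdm.2] at hv
    omega
  have hinj : Function.Injective w := fun a b h ↦ Fin.ext (by simpa [w] using h)
  calc m - k = (Set.range w).ncard := by rw [Set.ncard_range_of_injective hinj, Nat.card_fin]
    _ ≤ _ := Set.ncard_le_ncard (Set.range_subset_iff.mpr hw)

lemma mul_le_ncard_setOf_blockSplitGraph {n m k j : ℕ} (hmj : m * j ≤ n) (hkm : k ≤ m) :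
    j * k ≤ {v | m - k ≤ ((blockSplitGraph n m k).neighborSet v).ncard}.ncard := by
  have hblock (c : Fin j) : m * c.val + m ≤ n := by
    have := Nat.mul_le_mul_left m (c.isLt : c.val + 1 ≤ j)
    linarith [mul_add m c.val 1]
  let g (x : Fin j × Fin k) : Fin n :=
    ⟨m * x.1.val + x.2.val, by linarith [hblock x.1, x.2.isLt]⟩
  have hg (x : Fin j × Fin k) : (g x).val / m = x.1.val ∧ (g x).val % m = x.2.val := by
    have := x.2.isLt
    rw [Nat.div_mod_unique (by omega)]
    exact ⟨by simp only [g]; ring, by omega⟩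
  have hinj : Function.Injective g := fun x y h ↦ by
    have hx := hg x
    rw [h, hg y |>.1, hg y |>.2] at hx
    exact Prod.ext (Fin.ext hx.1.symm) (Fin.ext hx.2.symm)
  calc j * k = (Set.range g).ncard := by
        rw [Set.ncard_range_of_injective hinj, Nat.card_prod, Nat.card_fin, Nat.card_fin]
    _ ≤ _ := Set.ncard_le_ncard <| Set.range_subset_iff.mpr fun x ↦
        sub_le_ncard_neighborSet_blockSplitGraph (by rw [(hg x).2]; exact x.2.isLt)
          (by rw [(hg x).1]; exact hblock x.1)

theorem statement15_general (n k j : ℕ) (hn : 0 < n)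
    (hfloor : k < n / j) (V : Type) [Fintype V] (G : SimpleGraph V)
    (huniv : ∀ H : SimpleGraph (Fin n), HasTreeDecompWidthLe H k → Contains G H) :
    j * k ≤ {v : V | n / j - k ≤ (G.neighborSet v).ncard}.ncard := by
  have hcontains := huniv _ (hasTreeDecompWidthLe_blockSplitGraph hn (n / j) k)
  calc j * k ≤ {v | n / j - k ≤ ((blockSplitGraph n (n / j) k).neighborSet v).ncard}.ncard :=
        mul_le_ncard_setOf_blockSplitGraph (Nat.div_mul_le_self n j) hfloor.le
    _ ≤ _ := hcontains.ncard_setOf_le_ncard_neighborSet_le _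

/-- If `⌊n/j⌋ > k` then every graph containing every `n`-vertex graph of treewidth at most `k`
has at least `j·k` vertices of degree at least `⌊n/j⌋ − k`. -/
theorem statement15 (n k j : ℕ) (hn : 0 < n) (hk : 0 < k) (hj : 0 < j)
    (hfloor : k < n / j) (V : Type) [Fintype V] (G : SimpleGraph V)
    (huniv : ∀ H : SimpleGraph (Fin n), HasTreeDecompWidthLe H k → Contains G H) :
    j * k ≤ {v : V | n / j - k ≤ (G.neighborSet v).ncard}.ncard :=
  statement15_general n k j hn hfloor V G huniv
end

section
/- Let c_1, c_2 : ℕ → ℕ be defined by c_1(0) = c_2(0) = 1, c_1(i+1) = c_2(i) + 1, and c_2(i+1) = 4·c_1(i) + 3·c_2(i) + 1. Then for every i ≥ 0: if i is even then c_2(i) − 1 = 4·(c_1(i) − 1), and if i is odd then c_2(i) = 4·c_1(i); in particular, 4·c_1(i) − 3 ≤ c_2(i) ≤ 4·c_1(i) for all i. -/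
/-- For the sequences `c₁ 0 = c₂ 0 = 1`, `c₁ (i+1) = c₂ i + 1`,
`c₂ (i+1) = 4·c₁ i + 3·c₂ i + 1`: if `i` is even then `c₂ i − 1 = 4·(c₁ i − 1)`, and if `i` is
odd then `c₂ i = 4·c₁ i`; in particular `4·c₁ i − 3 ≤ c₂ i ≤ 4·c₁ i` for all `i`. -/
theorem statement18 (c1 c2 : ℕ → ℕ) (h10 : c1 0 = 1) (h20 : c2 0 = 1)
    (h1 : ∀ i, c1 (i + 1) = c2 i + 1) (h2 : ∀ i, c2 (i + 1) = 4 * c1 i + 3 * c2 i + 1) :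
    ∀ i : ℕ,
      (Even i → c2 i - 1 = 4 * (c1 i - 1)) ∧
      (Odd i → c2 i = 4 * c1 i) ∧
      4 * c1 i - 3 ≤ c2 i ∧ c2 i ≤ 4 * c1 i := by
  have key : ∀ i : ℕ, (Even i → c2 i + 3 = 4 * c1 i) ∧ (Odd i → c2 i = 4 * c1 i) := by
    intro i
    induction i with
    | zero =>
      refine ⟨fun _ => by omega, fun h => absurd h (by simp)⟩
    | succ n ih =>
      obtain ⟨he, ho⟩ := ih
      constructor
      · intro h
        have hn : Odd n := Nat.Even.sub_odd (Nat.le_add_left 1 n) h odd_one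
        have := ho hn
        rw [h1, h2]; omega
      · intro h
        have hn : Even n := by simpa [Nat.odd_add_one] using h
        have := he hn
        rw [h1, h2]; omega
  intro i
  obtain ⟨he, ho⟩ := key i
  rcases Nat.even_or_odd i with h | h
  · have := he h
    exact ⟨fun _ => by omega, fun h' => absurd h (Nat.not_even_iff_odd.mpr h'), by omega, by omega⟩
  · have := ho h
    exact ⟨fun h' => absurd h' (Nat.not_even_iff_odd.mpr h), fun _ => this, by omega, by omega⟩
end

section
/- Let c_1, c_2 : ℕ → ℕ be defined by c_1(0) = c_2(0) = 1, c_1(i+1) = c_2(i) + 1, and c_2(i+1) = 4·c_1(i) + 3·c_2(i) + 1. Then for every i ≥ 0, the partial sum c_1(0) + c_1(1) + … + c_1(i) is at most 2·c_1(i). -/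
/-- For the sequences `c₁ 0 = c₂ 0 = 1`, `c₁ (i+1) = c₂ i + 1`,
`c₂ (i+1) = 4·c₁ i + 3·c₂ i + 1`: the partial sum `c₁ 0 + c₁ 1 + … + c₁ i` is at most
`2·c₁ i` for every `i`. -/
theorem statement19 (c1 c2 : ℕ → ℕ) (h10 : c1 0 = 1) (h20 : c2 0 = 1)
    (h1 : ∀ i, c1 (i + 1) = c2 i + 1) (h2 : ∀ i, c2 (i + 1) = 4 * c1 i + 3 * c2 i + 1) :
    ∀ i : ℕ, ∑ j ∈ Finset.range (i + 1), c1 j ≤ 2 * c1 i := by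
  have aux : ∀ i, 2 * c1 i ≤ c2 i + 1 := by
    intro i
    induction i with
    | zero => simp [h10, h20]
    | succ n ih => rw [h1, h2]; omega
  intro i
  induction i with
  | zero => simp [h10]
  | succ n ih =>
    rw [Finset.sum_range_succ]
    have := aux n
    have := h1 n
    omega
end
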